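/- arXiv:1711.08543 — 8 statements merged into one kernel-verified Lean document; each statement's English description precedes it below -/
import Mathlib

section
/- Let {a_i}_{i∈ℕ} be a sequence of nonnegative reals with ∑_{i : a_i ≠ 0} (a_i - 1)^2 < ∞. Define b_i = 1 if a_i ≠ 0 and b_i = 0 if a_i = 0. Then for every sequence {c_i} with c_i ∈ {-1, 0, 1}, ∑_i (a_i - c_i)^2 < ∞, and #{i : c_i = 0 ∧ a_i > 0} = #{i : c_i ≠ 0 ∧ a_i = 0} (both finite), we have ∑_i (a_i - b_i)^2 ≤ ∑_i (a_i - c_i)^2, with equality only if c = b. -/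
/-- Diagonal version of uniqueness of the canonical Parseval frame in the index-zero
component: the sign pattern `b` (1 on nonzero entries, 0 elsewhere) is the unique
minimizer of the ℓ² distance among ±1/0-valued sequences quadratically close to `a`
with balanced mismatch count. -/
theorem stmt_2 (a : ℕ → ℝ) (ha : ∀ i, 0 ≤ a i)
    (b : ℕ → ℝ) (hb : ∀ i, b i = if a i ≠ 0 then 1 else 0)
    (hsum : Summable fun i => (a i - b i) ^ 2)
    (c : ℕ → ℝ) (hc : ∀ i, c i = -1 ∨ c i = 0 ∨ c i = 1)
    (hcsum : Summable fun i => (a i - c i) ^ 2)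
    (hfin0 : {i | c i = 0 ∧ 0 < a i}.Finite)
    (hfin1 : {i | c i ≠ 0 ∧ a i = 0}.Finite)
    (hindex : {i | c i = 0 ∧ 0 < a i}.ncard = {i | c i ≠ 0 ∧ a i = 0}.ncard) :
    (∑' i, (a i - b i) ^ 2) ≤ ∑' i, (a i - c i) ^ 2 ∧
      ((∑' i, (a i - b i) ^ 2) = (∑' i, (a i - c i) ^ 2) → c = b) := by
  set S0 : Set ℕ := {i | c i = 0 ∧ 0 < a i} with hS0
  set S1 : Set ℕ := {i | c i ≠ 0 ∧ a i = 0} with hS1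
  set h : ℕ → ℝ := fun i =>
    (a i - c i) ^ 2 - (a i - b i) ^ 2 - S1.indicator 1 i + S0.indicator 1 i with hh
  -- pointwise nonnegativity of h
  have hnn : ∀ i, 0 ≤ h i := by
    intro i
    simp only [hh]
    rcases eq_or_lt_of_le (ha i) with h0 | h0
    · -- a i = 0
      have hb0 : b i = 0 := by rw [hb i]; simp [← h0]
      have nmem0 : i ∉ S0 := by simp [hS0, ← h0]
      rw [Set.indicator_of_notMem nmem0]
      rcases hc i with hci | hci | hci
      · have mem1 : i ∈ S1 := ⟨by rw [hci]; norm_num, h0.symm⟩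
        rw [Set.indicator_of_mem mem1]
        simp [hci, hb0, ← h0]
      · have nmem1 : i ∉ S1 := by simp [hS1, hci]
        rw [Set.indicator_of_notMem nmem1]
        simp [hci, hb0]
      · have mem1 : i ∈ S1 := ⟨by rw [hci]; norm_num, h0.symm⟩
        rw [Set.indicator_of_mem mem1]
        simp [hci, hb0, ← h0]
    · -- 0 < a i
      have hb1 : b i = 1 := by rw [hb i]; simp [h0.ne']
      have nmem1 : i ∉ S1 := by simp [hS1, h0.ne']
      rw [Set.indicator_of_notMem nmem1]
      rcases hc i with hci | hci | hci
      · have nmem0 : i ∉ S0 := by simp [hS0, hci]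
        rw [Set.indicator_of_notMem nmem0]
        rw [hci, hb1]; nlinarith
      · have mem0 : i ∈ S0 := ⟨hci, h0⟩
        rw [Set.indicator_of_mem mem0]
        rw [hci, hb1]; simp; nlinarith
      · have nmem0 : i ∉ S0 := by simp [hS0, hci]
        rw [Set.indicator_of_notMem nmem0]
        rw [hci, hb1]; simp
  -- summability of the indicators
  have hsum1 : Summable (S1.indicator (1 : ℕ → ℝ)) :=
    summable_of_ne_finset_zero (s := hfin1.toFinset) (by
      intro i hi
      exact Set.indicator_of_notMem (by simpa using hi) _)
  have hsum0 : Summable (S0.indicator (1 : ℕ → ℝ)) :=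
    summable_of_ne_finset_zero (s := hfin0.toFinset) (by
      intro i hi
      exact Set.indicator_of_notMem (by simpa using hi) _)
  have hsumh : Summable h := by
    simpa [hh] using ((hcsum.sub hsum).sub hsum1).add hsum0
  -- tsums of the indicators agree
  have tind : ∀ (S : Set ℕ) (hS : S.Finite),
      ∑' i, S.indicator (1 : ℕ → ℝ) i = S.ncard := by
    intro S hS
    rw [tsum_eq_sum (s := hS.toFinset)
      (fun i hi => Set.indicator_of_notMem (by simpa using hi) _)]
    rw [Finset.sum_congr rfl (fun i hi => Set.indicator_of_mem (by simpa using hi) _)]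
    simp [Finset.sum_const, Set.ncard_eq_toFinset_card _ hS]
  have hteq : ∑' i, h i = (∑' i, (a i - c i) ^ 2) - ∑' i, (a i - b i) ^ 2 := by
    simp only [hh]
    rw [Summable.tsum_add ((hcsum.sub hsum).sub hsum1) hsum0,
      Summable.tsum_sub (hcsum.sub hsum) hsum1, Summable.tsum_sub hcsum hsum,
      tind S0 hfin0, tind S1 hfin1]
    rw [hindex]; ring
  have htnn : 0 ≤ ∑' i, h i := tsum_nonneg hnn
  constructor
  · linarith [hteq, htnn]
  · intro heq
    have ht0 : ∑' i, h i = 0 := by rw [hteq, heq]; ring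
    have hzero : ∀ i, h i = 0 := by
      intro i
      have hle : h i ≤ ∑' j, h j := Summable.le_tsum hsumh i (fun j _ => hnn j)
      have := hnn i
      linarith [hle, ht0.le, ht0.ge]
    -- S0 is empty
    have hS0e : S0 = ∅ := by
      by_contra hne
      obtain ⟨i, hi⟩ := Set.nonempty_iff_ne_empty.mpr hne
      obtain ⟨hci, hai⟩ := hi
      have hb1 : b i = 1 := by rw [hb i]; simp [hai.ne']
      have nmem1 : i ∉ S1 := by simp [hS1, hai.ne']
      have hzi := hzero i
      rw [hh] at hzi
      simp only [Set.indicator_of_notMem nmem1,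
        Set.indicator_of_mem (show i ∈ S0 from ⟨hci, hai⟩)] at hzi
      rw [hci, hb1] at hzi
      simp at hzi
      nlinarith
    have hS1e : S1 = ∅ := by
      have : S1.ncard = 0 := by rw [← hindex, hS0e]; simp
      exact (Set.ncard_eq_zero hfin1).mp this
    funext i
    rcases eq_or_lt_of_le (ha i) with h0 | h0
    · have hb0 : b i = 0 := by rw [hb i]; simp [← h0]
      rw [hb0]
      by_contra hci
      have : i ∈ S1 := ⟨hci, h0.symm⟩
      rw [hS1e] at this
      exact this
    · have hb1 : b i = 1 := by rw [hb i]; simp [h0.ne']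
      rw [hb1]
      rcases hc i with hci | hci | hci
      · exfalso
        have nmem1 : i ∉ S1 := by simp [hS1, h0.ne']
        have nmem0 : i ∉ S0 := by simp [hS0, hci]
        have hzi := hzero i
        rw [hh] at hzi
        simp only [Set.indicator_of_notMem nmem1, Set.indicator_of_notMem nmem0] at hzi
        rw [hci, hb1] at hzi
        nlinarith
      · exfalso
        have : i ∈ S0 := ⟨hci, h0⟩
        rw [hS0e] at this
        exact this
      · exact hci
end

section
/- Let {a_i} be a sequence of nonnegative reals with ∑_{i : a_i ≠ 0} (a_i - 1)^2 < ∞, and let k > 0 be an integer. Suppose there exist indices n_1, …, n_k with 0 < a_{n_1} ≤ … ≤ a_{n_k} ≤ a_j for every j ∉ {n_1,…,n_k} with a_j ≠ 0. Define b_i = 1 if a_i ≠ 0 and i ∉ {n_1,…,n_k}, and b_i = 0 otherwise. Then for every sequence {c_i} with c_i ∈ {-1,0,1}, ∑_i (a_i - c_i)^2 < ∞, and #{i : c_i = 0 ∧ a_i > 0} - #{i : c_i ≠ 0 ∧ a_i = 0} = k, one has ∑_i (a_i - b_i)^2 ≤ ∑_i (a_i - c_i)^2. -/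
/-!
Let `N` be the set of the `n_j`, `S = {c = 0 < a}` and `T = {c ≠ 0 = a}`, and write
`d i = (a i - c i)² - (a i - b i)²`. As `c` takes values in `{-1, 0, 1}`, `d = 1` on `T` and
`d ≥ 0` off `T ∪ (N \ S) ∪ (S \ N)`. A threshold `A ≥ 0` with `a ≤ A` on `N` and `A ≤ a` at the
other nonzero values gives `d ≥ 1 - 2A` on `N \ S` and `d ≥ 2A - 1` on `S \ N`. The index
condition `#S - #T = #N` means `#(S \ N) = #(N \ S) + #T`, so the sum of `d` is at least
`2A · #T ≥ 0`.
-/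

open Finset

lemma exists_separating_threshold {ι κ : Type*} [Finite κ] {a : ι → ℝ} (ha : ∀ i, 0 ≤ a i)
    {n : κ → ι} (hmin : ∀ i j, j ∉ Set.range n → a j ≠ 0 → a (n i) ≤ a j) :
    ∃ A, 0 ≤ A ∧ (∀ i, a (n i) ≤ A) ∧ ∀ j ∉ Set.range n, a j ≠ 0 → A ≤ a j := by
  rcases isEmpty_or_nonempty κ with hκ | hκ
  · exact ⟨0, le_rfl, fun i => hκ.elim i, fun j _ _ => ha j⟩
  · obtain ⟨i₀, hi₀⟩ := Finite.exists_max (a ∘ n)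
    exact ⟨a (n i₀), ha _, hi₀, hmin i₀⟩

lemma sum_nonneg_of_index_balance {ι : Type*} [DecidableEq ι] {d : ι → ℝ} {N S T : Finset ι}
    {A : ℝ} (hA : 0 ≤ A) (hT : ∀ i ∈ T, 1 ≤ d i) (hNS : ∀ i ∈ N \ S, 1 - 2 * A ≤ d i)
    (hSN : ∀ i ∈ S \ N, 2 * A - 1 ≤ d i) (hTN : Disjoint T N) (hTS : Disjoint T S)
    (hcard : #S = #N + #T) :
    0 ≤ ∑ i ∈ T ∪ (N \ S) ∪ (S \ N), d i := by
  have hbalance : #(S \ N) = #(N \ S) + #T := by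
    have := card_sdiff_add_card_inter S N
    have := card_sdiff_add_card_inter N S
    rw [inter_comm] at this
    omega
  have hdisj₁ : Disjoint T (N \ S) := hTN.mono_right sdiff_subset
  have hdisj₂ : Disjoint (T ∪ (N \ S)) (S \ N) :=
    disjoint_union_left.2 ⟨hTS.mono_right sdiff_subset, disjoint_sdiff_sdiff⟩
  rw [sum_union hdisj₂, sum_union hdisj₁]
  have eT := card_nsmul_le_sum T d 1 hT
  have eNS := card_nsmul_le_sum _ d _ hNS
  have eSN := card_nsmul_le_sum _ d _ hSN
  simp only [nsmul_eq_mul, mul_one, hbalance, Nat.cast_add] at eT eNS eSN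
  linarith [mul_nonneg hA (Nat.cast_nonneg (α := ℝ) #T)]

section UnitApprox

variable {ι : Type*} [DecidableEq ι] {a c : ι → ℝ} {N S T : Finset ι} {A : ℝ} {i : ι}

noncomputable def unitApprox (a : ι → ℝ) (N : Finset ι) (i : ι) : ℝ :=
  if a i ≠ 0 ∧ i ∉ N then 1 else 0

lemma unitApprox_of_eq_zero (h : a i = 0) : unitApprox a N i = 0 := by
  simp [unitApprox, h]

lemma unitApprox_of_mem (h : i ∈ N) : unitApprox a N i = 0 := by
  simp [unitApprox, h]

lemma unitApprox_of_ne_zero_of_notMem (h : a i ≠ 0) (hN : i ∉ N) : unitApprox a N i = 1 := by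
  simp [unitApprox, h, hN]

lemma summable_sq_sub_unitApprox
    (hsum : Summable fun i => if a i ≠ 0 then (a i - 1) ^ 2 else 0) :
    Summable fun i => (a i - unitApprox a N i) ^ 2 := by
  refine hsum.congr_cofinite (Filter.eventually_cofinite.2 (N.finite_toSet.subset fun i hi => ?_))
  by_contra hiN
  by_cases hai : a i = 0
  · simp [unitApprox_of_eq_zero hai, hai] at hi
  · simp [unitApprox_of_ne_zero_of_notMem hai hiN, hai] at hi

lemma sq_sub_unitApprox_le_of_notMem (ha : 0 ≤ a i) (hc : c i = -1 ∨ c i = 0 ∨ c i = 1)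
    (hS : ∀ i, i ∈ S ↔ c i = 0 ∧ 0 < a i) (hT : ∀ i, i ∈ T ↔ c i ≠ 0 ∧ a i = 0)
    (hi : i ∉ T ∪ (N \ S) ∪ (S \ N)) :
    (a i - unitApprox a N i) ^ 2 ≤ (a i - c i) ^ 2 := by
  simp only [mem_union, mem_sdiff, hS, hT, not_or, not_and, Classical.not_imp, not_not,
    not_lt] at hi
  obtain ⟨⟨hiT, hiNS⟩, hiSN⟩ := hi
  rcases ha.eq_or_lt with hai | hai
  · have hci : c i = 0 := by_contra fun h => hiT h hai.symm
    rw [hci, unitApprox_of_eq_zero hai.symm]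
  by_cases hiN : i ∈ N
  · rw [(hiNS hiN).1, unitApprox_of_mem hiN]
  · have hci : c i ≠ 0 := fun h => hiN (hiSN ⟨h, hai⟩)
    rw [unitApprox_of_ne_zero_of_notMem hai.ne' hiN]
    rcases hc with h | h | h
    · rw [h]; nlinarith
    · exact absurd h hci
    · rw [h]

theorem tsum_sq_sub_unitApprox_le (ha : ∀ i, 0 ≤ a i) (hA : 0 ≤ A)
    (hN : ∀ i ∈ N, 0 < a i ∧ a i ≤ A) (hAle : ∀ j ∉ N, a j ≠ 0 → A ≤ a j)
    (hc : ∀ i, c i = -1 ∨ c i = 0 ∨ c i = 1)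
    (hS : ∀ i, i ∈ S ↔ c i = 0 ∧ 0 < a i) (hT : ∀ i, i ∈ T ↔ c i ≠ 0 ∧ a i = 0)
    (hcard : #S = #N + #T) (hbsum : Summable fun i => (a i - unitApprox a N i) ^ 2)
    (hcsum : Summable fun i => (a i - c i) ^ 2) :
    ∑' i, (a i - unitApprox a N i) ^ 2 ≤ ∑' i, (a i - c i) ^ 2 := by
  set d : ι → ℝ := fun i => (a i - c i) ^ 2 - (a i - unitApprox a N i) ^ 2 with hd
  have hd_T : ∀ i ∈ T, 1 ≤ d i := by
    intro i hi
    obtain ⟨hci, hai⟩ := (hT i).1 hi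
    rcases hc i with h | h | h
    · simp only [hd, h, hai, unitApprox_of_eq_zero hai]; norm_num
    · exact absurd h hci
    · simp only [hd, h, hai, unitApprox_of_eq_zero hai]; norm_num
  have hd_NS : ∀ i ∈ N \ S, 1 - 2 * A ≤ d i := by
    intro i hi
    obtain ⟨hiN, hiS⟩ := mem_sdiff.1 hi
    obtain ⟨hai, haA⟩ := hN i hiN
    have hci : c i ≠ 0 := fun h => hiS ((hS i).2 ⟨h, hai⟩)
    rcases hc i with h | h | h
    · simp only [hd, h, unitApprox_of_mem hiN]; nlinarith
    · exact absurd h hci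
    · simp only [hd, h, unitApprox_of_mem hiN]; nlinarith
  have hd_SN : ∀ i ∈ S \ N, 2 * A - 1 ≤ d i := by
    intro i hi
    obtain ⟨hiS, hiN⟩ := mem_sdiff.1 hi
    obtain ⟨hci, hai⟩ := (hS i).1 hiS
    have := hAle i hiN hai.ne'
    simp only [hd, hci, unitApprox_of_ne_zero_of_notMem hai.ne' hiN]
    nlinarith
  have hd_off (i) (hi : i ∉ T ∪ (N \ S) ∪ (S \ N)) : 0 ≤ d i :=
    sub_nonneg.2 (sq_sub_unitApprox_le_of_notMem (ha i) (hc i) hS hT hi)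
  have hTN : Disjoint T N := disjoint_left.2 fun i hiT hiN => ((hT i).1 hiT).2.not_gt (hN i hiN).1
  have hTS : Disjoint T S := disjoint_left.2 fun i hiT hiS => ((hT i).1 hiT).1 ((hS i).1 hiS).1
  have hgain : 0 ≤ ∑' i, d i :=
    (sum_nonneg_of_index_balance hA hd_T hd_NS hd_SN hTN hTS hcard).trans
      ((hcsum.sub hbsum).sum_le_tsum _ hd_off)
  rw [hd, hcsum.tsum_sub hbsum] at hgain
  linarith

end UnitApprox

theorem stmt_3_general (a : ℕ → ℝ) (ha : ∀ i, 0 ≤ a i)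
    (hsum : Summable fun i => if a i ≠ 0 then (a i - 1) ^ 2 else 0)
    (k : ℕ)
    (n : Fin k → ℕ) (hn : Function.Injective n)
    (hpos : ∀ j, 0 < a (n j))
    (hmin : ∀ (i : Fin k) (j : ℕ), j ∉ Set.range n → a j ≠ 0 → a (n i) ≤ a j)
    (b : ℕ → ℝ)
    (hb : ∀ i, b i = if a i ≠ 0 ∧ i ∉ Set.range n then 1 else 0)
    (c : ℕ → ℝ) (hc : ∀ i, c i = -1 ∨ c i = 0 ∨ c i = 1)
    (hcsum : Summable fun i => (a i - c i) ^ 2)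
    (hfin0 : {i | c i = 0 ∧ 0 < a i}.Finite)
    (hfin1 : {i | c i ≠ 0 ∧ a i = 0}.Finite)
    (hindex : ({i | c i = 0 ∧ 0 < a i}.ncard : ℤ) - {i | c i ≠ 0 ∧ a i = 0}.ncard = k) :
    (∑' i, (a i - b i) ^ 2) ≤ ∑' i, (a i - c i) ^ 2 := by
  obtain ⟨A, hA, hbelow, habove⟩ := exists_separating_threshold ha hmin
  have hmemN (i : ℕ) : i ∈ univ.image n ↔ i ∈ Set.range n := by simp
  obtain rfl : b = unitApprox a (univ.image n) := funext fun i => by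
    simp only [hb i, unitApprox, hmemN]
  have hcard : #hfin0.toFinset = #(univ.image n) + #hfin1.toFinset := by
    rw [Set.ncard_eq_toFinset_card _ hfin0, Set.ncard_eq_toFinset_card _ hfin1] at hindex
    rw [card_image_of_injective _ hn, card_univ, Fintype.card_fin]
    omega
  have hN : ∀ i ∈ univ.image n, 0 < a i ∧ a i ≤ A := by
    simpa using fun j => ⟨hpos j, hbelow j⟩
  exact tsum_sq_sub_unitApprox_le ha hA hN (fun j hj => habove j ((hmemN j).not.1 hj)) hc
    (by simp) (by simp) hcard (summable_sq_sub_unitApprox hsum) hcsum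

/-- Diagonal version of existence of symmetric approximation in the positive-index-k
component: zeroing out the k smallest nonzero values and matching all other nonzero
values by 1 minimizes the ℓ² cost among ±1/0 sequences of index k. -/
theorem stmt_3 (a : ℕ → ℝ) (ha : ∀ i, 0 ≤ a i)
    (hsum : Summable fun i => if a i ≠ 0 then (a i - 1) ^ 2 else 0)
    (k : ℕ) (hk : 0 < k)
    (n : Fin k → ℕ) (hn : Function.Injective n)
    (hpos : ∀ j, 0 < a (n j))
    (hmono : Monotone (a ∘ n))
    (hmin : ∀ (i : Fin k) (j : ℕ), j ∉ Set.range n → a j ≠ 0 → a (n i) ≤ a j)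
    (b : ℕ → ℝ)
    (hb : ∀ i, b i = if a i ≠ 0 ∧ i ∉ Set.range n then 1 else 0)
    (c : ℕ → ℝ) (hc : ∀ i, c i = -1 ∨ c i = 0 ∨ c i = 1)
    (hcsum : Summable fun i => (a i - c i) ^ 2)
    (hfin0 : {i | c i = 0 ∧ 0 < a i}.Finite)
    (hfin1 : {i | c i ≠ 0 ∧ a i = 0}.Finite)
    (hindex : ({i | c i = 0 ∧ 0 < a i}.ncard : ℤ) - {i | c i ≠ 0 ∧ a i = 0}.ncard = k) :
    (∑' i, (a i - b i) ^ 2) ≤ ∑' i, (a i - c i) ^ 2 :=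
  stmt_3_general a ha hsum k n hn hpos hmin b hb c hc hcsum hfin0 hfin1 hindex
end

section
/- Let {a_i} be a sequence of nonnegative reals with ∑_{i : a_i ≠ 0}(a_i-1)^2 < ∞ and let k > 0 be an integer. If there do NOT exist k indices n_1,…,n_k with 0 < a_{n_1} ≤ … ≤ a_{n_k} ≤ a_j for all other j with a_j ≠ 0 (i.e., the set of nonzero values has no k smallest elements), then the function f({c_i}) = ∑_i (a_i - c_i)^2 has no minimizer over the set of sequences {c_i} with c_i ∈ {-1,0,1}, ∑_i (a_i - c_i)^2 < ∞, and #{i : c_i = 0 ∧ a_i > 0} - #{i : c_i ≠ 0 ∧ a_i = 0} = k. -/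
/-!
Let `c` be admissible of index `k` and let `Z = {i | c i = 0 ∧ 0 < a i}`, a finite set with at
least `k` elements. If every `i ∈ Z` had only finitely many nonzero values `a j < a i` below it,
the `k` smallest elements of the finite set `Z ∪ {j | 0 < a j < a i for some i ∈ Z}` would be `k`
smallest nonzero values of `a`. So some `i₀ ∈ Z` has infinitely many `j` with `0 < a j < a i₀`,
and one of them, `j₀`, lies outside `Z`, i.e. `c j₀ = ±1`. Setting `c i₀ := 1`, `c j₀ := 0`
keeps the index and lowers the cost by `2 (a i₀ ∓ a j₀) > 0`.
-/

/-- Admissible index-k candidate sequences in the diagonal symmetric approximation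
problem: ±1/0-valued, quadratically close to `a`, with index equal to `k`. -/
def AdmissibleSeq (a : ℕ → ℝ) (k : ℤ) (c : ℕ → ℝ) : Prop :=
  (∀ i, c i = -1 ∨ c i = 0 ∨ c i = 1) ∧
  (Summable fun i => (a i - c i) ^ 2) ∧
  {i | c i = 0 ∧ 0 < a i}.Finite ∧ {i | c i ≠ 0 ∧ a i = 0}.Finite ∧
  ({i | c i = 0 ∧ 0 < a i}.ncard : ℤ) - {i | c i ≠ 0 ∧ a i = 0}.ncard = k

open Function

theorem Finset.exists_subset_card_eq_forall_le {ι α : Type*} [LinearOrder α] (f : ι → α) :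
    ∀ (k : ℕ) (T : Finset ι), k ≤ T.card →
      ∃ t ⊆ T, t.card = k ∧ ∀ x ∈ t, ∀ y ∈ T, y ∉ t → f x ≤ f y
  | 0, _, _ => ⟨∅, empty_subset _, rfl, by simp⟩
  | k + 1, T, hT => by
    classical
    obtain ⟨t, htT, rfl, hle⟩ := exists_subset_card_eq_forall_le f k T (by omega)
    obtain ⟨m, hm, hmin⟩ := (T \ t).exists_min_image f <| sdiff_nonempty.mpr fun h => by
      have := card_le_card h; omega
    rw [mem_sdiff] at hm
    refine ⟨insert m t, insert_subset hm.1 htT, card_insert_of_notMem hm.2, ?_⟩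
    simp only [mem_insert, not_or, forall_eq_or_imp]
    exact ⟨fun y hy hyt => hmin y (mem_sdiff.mpr ⟨hy, hyt.2⟩),
      fun x hx y hy hyt => hle x hx y hy hyt.2⟩

theorem exists_finset_card_eq_forall_le_of_finite_lt {ι α : Type*} [LinearOrder α] (f : ι → α)
    {s Z : Set ι} {k : ℕ} (hZs : Z ⊆ s) (hZ : Z.Finite) (hk : k ≤ Z.ncard)
    (hlt : ∀ i ∈ Z, {j ∈ s | f j < f i}.Finite) :
    ∃ t : Finset ι, ↑t ⊆ s ∧ t.card = k ∧ ∀ x ∈ t, ∀ y ∈ s, y ∉ t → f x ≤ f y := by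
  classical
  have hT : (Z ∪ ⋃ i ∈ Z, {j ∈ s | f j < f i}).Finite := hZ.union (hZ.biUnion hlt)
  set T := hT.toFinset
  have hZT : Z ⊆ T := by simp [T]
  obtain ⟨t, htT, rfl, hle⟩ := T.exists_subset_card_eq_forall_le f k <| by
    simpa using hk.trans (Set.ncard_le_ncard hZT T.finite_toSet)
  have hbelow : ∀ x ∈ t, ∃ i ∈ Z, f x ≤ f i := by
    intro x hx
    by_cases hZt : Z ⊆ t
    · have : Z = t := Set.eq_of_subset_of_ncard_le hZt (by simpa using hk) t.finite_toSet
      exact ⟨x, this ▸ hx, le_rfl⟩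
    · obtain ⟨i, hiZ, hit⟩ := Set.not_subset.mp hZt
      exact ⟨i, hiZ, hle x hx i (hZT hiZ) hit⟩
  have hTs : ↑T ⊆ s := by
    simp only [T, Set.Finite.coe_toFinset]
    exact Set.union_subset hZs (Set.iUnion₂_subset fun _ _ => Set.sep_subset _ _)
  refine ⟨t, (Finset.coe_subset.mpr htT).trans hTs, rfl, fun x hx y hy hyt => ?_⟩
  by_cases hyT : y ∈ T
  · exact hle x hx y hyT hyt
  · obtain ⟨i, hiZ, hxi⟩ := hbelow x hx
    refine hxi.trans (not_lt.mp fun hyi => hyT ?_)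
    simp only [T, Set.Finite.mem_toFinset, Set.mem_union, Set.mem_iUnion]
    exact Or.inr ⟨i, hiZ, hy, hyi⟩

theorem exists_infinite_lt_of_not_exists_smallest {a : ℕ → ℝ} (ha : ∀ i, 0 ≤ a i) {k : ℕ}
    (hno : ¬ ∃ n : Fin k → ℕ, Injective n ∧ (∀ j, 0 < a (n j)) ∧
      ∀ (i : Fin k) (j : ℕ), j ∉ Set.range n → a j ≠ 0 → a (n i) ≤ a j)
    {Z : Set ℕ} (hZ : Z.Finite) (hZpos : ∀ i ∈ Z, 0 < a i) (hk : k ≤ Z.ncard) :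
    ∃ i ∈ Z, {j | 0 < a j ∧ a j < a i}.Infinite := by
  by_contra! hfin
  obtain ⟨t, hts, rfl, hle⟩ :=
    exists_finset_card_eq_forall_le_of_finite_lt a (s := {j | 0 < a j}) hZpos hZ hk hfin
  have hmem := t.orderEmbOfFin_mem rfl
  refine hno ⟨t.orderEmbOfFin rfl, (t.orderEmbOfFin rfl).injective, fun j => hts (hmem j),
    fun i j hj haj => hle _ (hmem i) j ((ha j).lt_of_ne' haj) ?_⟩
  rwa [Finset.range_orderEmbOfFin] at hj

section Exchange

variable {a c : ℕ → ℝ} {i₀ j₀ : ℕ}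

theorem setOf_update_update_eq_zero (hij : i₀ ≠ j₀) (haj : 0 < a j₀) :
    {i | update (update c i₀ 1) j₀ 0 i = 0 ∧ 0 < a i} =
      insert j₀ ({i | c i = 0 ∧ 0 < a i} \ {i₀}) := by
  ext i
  by_cases hj : i = j₀
  · subst hj; simp [haj]
  by_cases hi : i = i₀
  · subst hi; simp [hij]
  · simp [hi, hj]

theorem setOf_update_update_ne_zero (hai : 0 < a i₀) (haj : 0 < a j₀) :
    {i | update (update c i₀ 1) j₀ 0 i ≠ 0 ∧ a i = 0} = {i | c i ≠ 0 ∧ a i = 0} := by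
  ext i
  by_cases hj : i = j₀
  · subst hj; simp [haj.ne']
  by_cases hi : i = i₀
  · subst hi; simp [hai.ne']
  · simp [hi, hj]

theorem hasSum_sq_sub_update_update {S : ℝ} (h : HasSum (fun i => (a i - c i) ^ 2) S)
    (hci : c i₀ = 0) (hij : i₀ ≠ j₀) :
    HasSum (fun i => (a i - update (update c i₀ 1) j₀ 0 i) ^ 2)
      (a j₀ ^ 2 - (a j₀ - c j₀) ^ 2 + ((a i₀ - 1) ^ 2 - a i₀ ^ 2 + S)) := by
  have hfun : (fun i => (a i - update (update c i₀ 1) j₀ 0 i) ^ 2) =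
      update (update (fun i => (a i - c i) ^ 2) i₀ ((a i₀ - 1) ^ 2)) j₀ (a j₀ ^ 2) := by
    funext i
    simp only [update_apply]
    split_ifs <;> simp_all
  have h' := (h.update i₀ ((a i₀ - 1) ^ 2)).update j₀ (a j₀ ^ 2)
  rw [update_of_ne hij.symm, hci, sub_zero] at h'
  rwa [hfun]

theorem AdmissibleSeq.update_update {k : ℤ} (hc : AdmissibleSeq a k c) (hci : c i₀ = 0)
    (hai : 0 < a i₀) (hcj : c j₀ ≠ 0) (haj : 0 < a j₀) :
    AdmissibleSeq a k (update (update c i₀ 1) j₀ 0) := by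
  obtain ⟨hval, hsum, hZ, hW, hidx⟩ := hc
  have hij : i₀ ≠ j₀ := fun h => hcj (h ▸ hci)
  have hi : i₀ ∈ {i | c i = 0 ∧ 0 < a i} := ⟨hci, hai⟩
  have hj : j₀ ∉ {i | c i = 0 ∧ 0 < a i} \ {i₀} := fun h => hcj h.1.1
  refine ⟨fun i => ?_, ?_, ?_, ?_, ?_⟩
  · simp only [update_apply]
    split_ifs <;> simp [hval i]
  · exact (hasSum_sq_sub_update_update hsum.hasSum hci hij).summable
  · rw [setOf_update_update_eq_zero hij haj]; exact hZ.sdiff.insert j₀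
  · rwa [setOf_update_update_ne_zero hai haj]
  · rw [setOf_update_update_eq_zero hij haj, setOf_update_update_ne_zero hai haj,
      Set.ncard_insert_of_notMem hj hZ.sdiff, Set.ncard_sdiff_singleton_add_one hi hZ]
    exact hidx

theorem tsum_sq_sub_update_update_lt (hsum : Summable fun i => (a i - c i) ^ 2)
    (hci : c i₀ = 0) (hcj : c j₀ = -1 ∨ c j₀ = 1) (haj : 0 < a j₀) (hlt : a j₀ < a i₀) :
    ∑' i, (a i - update (update c i₀ 1) j₀ 0 i) ^ 2 < ∑' i, (a i - c i) ^ 2 := by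
  rw [(hasSum_sq_sub_update_update hsum.hasSum hci (fun h => hlt.ne (h ▸ rfl))).tsum_eq]
  rcases hcj with h | h <;> rw [h] <;> nlinarith

end Exchange

theorem stmt_4_general (a : ℕ → ℝ) (ha : ∀ i, 0 ≤ a i) (k : ℕ)
    (hno : ¬ ∃ n : Fin k → ℕ, Function.Injective n ∧ (∀ j, 0 < a (n j)) ∧
      ∀ (i : Fin k) (j : ℕ), j ∉ Set.range n → a j ≠ 0 → a (n i) ≤ a j) :
    ¬ ∃ c : ℕ → ℝ, AdmissibleSeq a k c ∧
      ∀ c' : ℕ → ℝ, AdmissibleSeq a k c' →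
        (∑' i, (a i - c i) ^ 2) ≤ ∑' i, (a i - c' i) ^ 2 := by
  rintro ⟨c, hc, hmin⟩
  have hZk : k ≤ {i | c i = 0 ∧ 0 < a i}.ncard := by have := hc.2.2.2.2; omega
  obtain ⟨i₀, ⟨hci₀, hai₀⟩, hinf⟩ :=
    exists_infinite_lt_of_not_exists_smallest ha hno hc.2.2.1 (fun _ hi => hi.2) hZk
  obtain ⟨j₀, ⟨haj₀, hlt⟩, hj₀⟩ := (hinf.sdiff hc.2.2.1).nonempty
  have hcj₀ : c j₀ ≠ 0 := fun h => hj₀ ⟨h, haj₀⟩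
  have hcj₀' : c j₀ = -1 ∨ c j₀ = 1 := (hc.1 j₀).imp_right (Or.resolve_left · hcj₀)
  exact (hmin _ (hc.update_update hci₀ hai₀ hcj₀ haj₀)).not_gt
    (tsum_sq_sub_update_update_lt hc.2.1 hci₀ hcj₀' haj₀ hlt)

/-- Nonexistence half of the diagonal symmetric approximation result for positive
index k: if the set of nonzero values of `a` has no k smallest elements, then the
ℓ² cost has no minimizer over the admissible index-k sequences. -/
theorem stmt_4 (a : ℕ → ℝ) (ha : ∀ i, 0 ≤ a i)
    (hsum : Summable fun i => if a i ≠ 0 then (a i - 1) ^ 2 else 0)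
    (k : ℕ) (hk : 0 < k)
    (hno : ¬ ∃ n : Fin k → ℕ, Function.Injective n ∧ (∀ j, 0 < a (n j)) ∧
      ∀ (i : Fin k) (j : ℕ), j ∉ Set.range n → a j ≠ 0 → a (n i) ≤ a j) :
    ¬ ∃ c : ℕ → ℝ, AdmissibleSeq a k c ∧
      ∀ c' : ℕ → ℝ, AdmissibleSeq a k c' →
        (∑' i, (a i - c i) ^ 2) ≤ ∑' i, (a i - c' i) ^ 2 :=
  stmt_4_general a ha k hno
end

section
/- Let {a_i} be a sequence of nonnegative reals with ∑_{i : a_i ≠ 0}(a_i-1)^2 < ∞, let k < 0 be an integer, and suppose the set A = {i : a_i = 0} satisfies #A ≥ -k. Fix distinct indices i_1,…,i_{-k} ∈ A and signs ε_1,…,ε_{-k} ∈ {-1,1}. Define b_i = 1 if a_i ≠ 0, b_{i_j} = ε_j for j = 1,…,-k, and b_i = 0 otherwise. Then ∑_i (a_i - b_i)^2 ≤ ∑_i (a_i - c_i)^2 for every sequence {c_i} with c_i ∈ {-1,0,1}, ∑_i (a_i - c_i)^2 < ∞, and #{i : c_i = 0 ∧ a_i > 0} - #{i : c_i ≠ 0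 ∧ a_i = 0} = k. -/
/-- Diagonal version of symmetric approximation in negative-index components: matching
each nonzero `a i` with 1 and placing `m = -k` extra ±1's on indices where `a i = 0`
minimizes the ℓ² cost among ±1/0 sequences of index `k < 0`. -/
theorem stmt_5 (a : ℕ → ℝ) (ha : ∀ i, 0 ≤ a i)
    (hsum : Summable fun i => if a i ≠ 0 then (a i - 1) ^ 2 else 0)
    (k : ℤ) (hk : k < 0) (m : ℕ) (hm : (m : ℤ) = -k)
    (hcardA : m ≤ {i | a i = 0}.ncard ∨ {i | a i = 0}.Infinite)
    (idx : Fin m → ℕ) (hidx : Function.Injective idx)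
    (hidx0 : ∀ j, a (idx j) = 0)
    (ε : Fin m → ℝ) (hε : ∀ j, ε j = 1 ∨ ε j = -1)
    (b : ℕ → ℝ)
    (hb1 : ∀ i, a i ≠ 0 → b i = 1)
    (hb2 : ∀ j, b (idx j) = ε j)
    (hb3 : ∀ i, a i = 0 → (∀ j, idx j ≠ i) → b i = 0)
    (c : ℕ → ℝ) (hc : ∀ i, c i = -1 ∨ c i = 0 ∨ c i = 1)
    (hcsum : Summable fun i => (a i - c i) ^ 2)
    (hfin0 : {i | c i = 0 ∧ 0 < a i}.Finite)
    (hfin1 : {i | c i ≠ 0 ∧ a i = 0}.Finite)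
    (hindex : ({i | c i = 0 ∧ 0 < a i}.ncard : ℤ) - {i | c i ≠ 0 ∧ a i = 0}.ncard = k) :
    (∑' i, (a i - b i) ^ 2) ≤ ∑' i, (a i - c i) ^ 2 := by
  classical
  set g : ℕ → ℝ := fun i => if a i ≠ 0 then (a i - 1) ^ 2 else 0 with hg
  set R : Finset ℕ := Finset.image idx Finset.univ with hR
  have hRcard : R.card = m := by
    rw [hR, Finset.card_image_of_injective _ hidx, Finset.card_univ, Fintype.card_fin]
  have hS := hfin0
  have hT := hfin1
  set S : Finset ℕ := hS.toFinset with hSdef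
  set T : Finset ℕ := hT.toFinset with hTdef
  -- indicator functions
  have hind_sum : ∀ s : Finset ℕ, Summable (fun i => if i ∈ s then (1:ℝ) else 0) := by
    intro s
    apply summable_of_ne_finset_zero (s := s)
    intro i hi
    simp [hi]
  have hind_tsum : ∀ s : Finset ℕ, (∑' i, (if i ∈ s then (1:ℝ) else 0)) = s.card := by
    intro s
    rw [tsum_eq_sum (s := s) (fun i hi => by simp [hi])]
    simp
  -- decompose the left side
  have hf : ∀ i, (a i - b i) ^ 2 = g i + (if i ∈ R then (1:ℝ) else 0) := by
    intro i
    by_cases ha0 : a i = 0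
    · by_cases hiR : i ∈ R
      · obtain ⟨j, -, hj⟩ := Finset.mem_image.mp hiR
        have hb : b i = ε j := hj ▸ hb2 j
        have : (ε j) ^ 2 = 1 := by rcases hε j with h | h <;> rw [h] <;> norm_num
        simp [hg, ha0, hiR, hb, this]
      · have hb : b i = 0 := by
          apply hb3 i ha0
          intro j hj
          exact hiR (Finset.mem_image.mpr ⟨j, Finset.mem_univ j, hj⟩)
        simp [hg, ha0, hiR, hb]
    · have hiR : i ∉ R := by
        intro hiR
        obtain ⟨j, -, hj⟩ := Finset.mem_image.mp hiR
        exact ha0 (hj ▸ hidx0 j)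
      simp [hg, ha0, hiR, hb1 i ha0]
  have hLHS : (∑' i, (a i - b i) ^ 2) = (∑' i, g i) + m := by
    calc (∑' i, (a i - b i) ^ 2)
        = ∑' i, (g i + (if i ∈ R then (1:ℝ) else 0)) := by
          exact tsum_congr hf
      _ = (∑' i, g i) + ∑' i, (if i ∈ R then (1:ℝ) else 0) :=
          Summable.tsum_add hsum (hind_sum R)
      _ = (∑' i, g i) + m := by rw [hind_tsum R, hRcard]
  -- pointwise lower bound for the right side
  have hle : ∀ i, g i + (if i ∈ T then (1:ℝ) else 0) - (if i ∈ S then (1:ℝ) else 0)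
      ≤ (a i - c i) ^ 2 := by
    intro i
    have hai := ha i
    by_cases ha0 : a i = 0
    · have hiS : i ∉ S := by simp [hSdef, Set.Finite.mem_toFinset, ha0]
      by_cases hc0 : c i = 0
      · have hiT : i ∉ T := by simp [hTdef, Set.Finite.mem_toFinset, hc0]
        simp [hg, ha0, hc0, hiS, hiT]
      · have hiT : i ∈ T := by simp [hTdef, Set.Finite.mem_toFinset, ha0, hc0]
        have hcc : (c i) ^ 2 = 1 := by
          rcases hc i with h | h | h <;> simp [h] at hc0 ⊢ <;> norm_num [h]
        simp only [hg, ha0, ne_eq, not_true_eq_false, if_false, if_pos hiT, if_neg hiS]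
        nlinarith [hcc]
    · have hapos : 0 < a i := lt_of_le_of_ne hai (Ne.symm ha0)
      have hiT : i ∉ T := by simp [hTdef, Set.Finite.mem_toFinset, ha0]
      simp only [hg, if_pos ha0, if_neg hiT]
      by_cases hc0 : c i = 0
      · have hiS : i ∈ S := by simp [hSdef, Set.Finite.mem_toFinset, hc0, hapos]
        rw [if_pos hiS, hc0]
        nlinarith
      · have hiS : i ∉ S := by simp [hSdef, Set.Finite.mem_toFinset, hc0]
        rw [if_neg hiS]
        rcases hc i with h | h | h
        · rw [h]; nlinarith
        · exact absurd h hc0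
        · rw [h]; ring_nf; nlinarith
  -- sum the lower bound
  have hsumL : Summable (fun i => g i + (if i ∈ T then (1:ℝ) else 0)
      - (if i ∈ S then (1:ℝ) else 0)) :=
    (hsum.add (hind_sum T)).sub (hind_sum S)
  have hRHS : (∑' i, g i) + (T.card : ℝ) - S.card ≤ ∑' i, (a i - c i) ^ 2 := by
    have := Summable.tsum_le_tsum hle hsumL hcsum
    rwa [Summable.tsum_sub (hsum.add (hind_sum T)) (hind_sum S), Summable.tsum_add hsum (hind_sum T),
      hind_tsum T, hind_tsum S] at this
  -- cardinality bookkeeping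
  have hScard : {i | c i = 0 ∧ 0 < a i}.ncard = S.card := Set.ncard_eq_toFinset_card _ hS
  have hTcard : {i | c i ≠ 0 ∧ a i = 0}.ncard = T.card := Set.ncard_eq_toFinset_card _ hT
  have hcard : (T.card : ℤ) = S.card + m := by
    rw [hScard, hTcard] at hindex
    omega
  have hcardR : (T.card : ℝ) = (S.card : ℝ) + m := by exact_mod_cast hcard
  rw [hLHS]
  linarith [hRHS]
end

section
/- Let F be a bounded operator with closed range on a Hilbert space, with polar decomposition F = U|F|, and let X be a partial isometry such that F − X is compact. Then the essential spectrum of |F| is contained in {0, 1}. -/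
/-!
Write `T = U* F` for `|F|`. Since `T` is self-adjoint and `F = U T`, we have `F* F = T U* F = T²`,
and `F* F - X* X = F* (F - X) + (F - X)* X` is compact. So in the Calkin algebra the image of `T`
squares to the image of the projection `X* X`, and by spectral mapping every point `z` of its
spectrum satisfies `z² ∈ {0, 1}`. The remaining value `z = -1` is excluded because `T` is positive,
so `-1` is not even in the spectrum of `T`.
-/

noncomputable section

/-- The sequence space ℓ² over ℂ. -/
abbrev L2C : Type := lp (fun _ : ℕ => ℂ) 2

/-- The standard orthonormal basis vectors of ℓ². -/
def stdVec (i : ℕ) : L2C := lp.single 2 i 1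

/-- A bounded operator between Hilbert spaces is a partial isometry if it is
isometric on the orthogonal complement of its kernel. -/
def IsPartialIsometry {E F : Type*} [NormedAddCommGroup E] [InnerProductSpace ℂ E]
    [NormedAddCommGroup F] [InnerProductSpace ℂ F] (X : E →L[ℂ] F) : Prop :=
  ∀ v ∈ (LinearMap.ker (X : E →ₗ[ℂ] F))ᗮ, ‖X v‖ = ‖v‖

/-- A bounded operator from ℓ² is Hilbert–Schmidt if the squared norms of the images
of the standard basis vectors are summable. -/
def IsHS {H : Type*} [NormedAddCommGroup H] [InnerProductSpace ℂ H]
    (T : L2C →L[ℂ] H) : Prop := Summable fun i => ‖T (stdVec i)‖ ^ 2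

/-- Squared Hilbert–Schmidt norm of a bounded operator from ℓ². -/
def hsNormSq {H : Type*} [NormedAddCommGroup H] [InnerProductSpace ℂ H]
    (T : L2C →L[ℂ] H) : ℝ := ∑' i, ‖T (stdVec i)‖ ^ 2

/-- `U` is the partial isometry in the polar decomposition `F = U|F|` of `F`:
`U` is a partial isometry with the same kernel as `F`, `U* F = |F|` is positive
and `F = U (U* F)`. -/
def IsPolarDecomp {H : Type*} [NormedAddCommGroup H] [InnerProductSpace ℂ H]
    [CompleteSpace H] (F U : L2C →L[ℂ] H) : Prop :=
  IsPartialIsometry U ∧ LinearMap.ker (U : L2C →ₗ[ℂ] H) = LinearMap.ker (F : L2C →ₗ[ℂ] H) ∧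
  (ContinuousLinearMap.adjoint U ∘L F).IsPositive ∧
  F = U ∘L (ContinuousLinearMap.adjoint U ∘L F)

/-- A pair of projections `(P, Q)` is a Fredholm pair if `ker Q ∩ ran P` and
`ran Q ∩ ker P` are both finite dimensional. -/
def FredholmPair {E : Type*} [NormedAddCommGroup E] [InnerProductSpace ℂ E]
    (P Q : E →L[ℂ] E) : Prop :=
  FiniteDimensional ℂ ↥(LinearMap.ker (Q : E →ₗ[ℂ] E) ⊓ LinearMap.range (P : E →ₗ[ℂ] E)) ∧
  FiniteDimensional ℂ ↥(LinearMap.range (Q : E →ₗ[ℂ] E) ⊓ LinearMap.ker (P : E →ₗ[ℂ] E))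

/-- The index of a Fredholm pair of projections:
`j(P,Q) = dim(ker Q ∩ ran P) - dim(ran Q ∩ ker P)`. -/
def pairIndex {E : Type*} [NormedAddCommGroup E] [InnerProductSpace ℂ E]
    (P Q : E →L[ℂ] E) : ℤ :=
  (Module.finrank ℂ ↥(LinearMap.ker (Q : E →ₗ[ℂ] E) ⊓ LinearMap.range (P : E →ₗ[ℂ] E)) : ℤ) -
  (Module.finrank ℂ ↥(LinearMap.range (Q : E →ₗ[ℂ] E) ⊓ LinearMap.ker (P : E →ₗ[ℂ] E)) : ℤ)


/-- `z` lies in the essential spectrum of `T` iff `T - z•1` is not invertible modulo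
compact operators. -/
def InEssentialSpectrum {E : Type*} [NormedAddCommGroup E] [InnerProductSpace ℂ E]
    (T : E →L[ℂ] E) (z : ℂ) : Prop :=
  ¬ ∃ S : E →L[ℂ] E, IsCompactOperator ⇑((S ∘L (T - z • 1) - 1 : E →L[ℂ] E)) ∧
      IsCompactOperator ⇑(((T - z • 1) ∘L S - 1 : E →L[ℂ] E))

open ContinuousLinearMap
open scoped InnerProduct

section Calkin

variable (𝕜 E : Type*) [NontriviallyNormedField 𝕜] [NormedAddCommGroup E] [NormedSpace 𝕜 E]

def compactOperatorIdeal : TwoSidedIdeal (E →L[𝕜] E) :=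
  .mk' {T | IsCompactOperator T} isCompactOperator_zero .add .neg
    (fun hy => hy.clm_comp _) (fun hx => hx.comp_clm _)

abbrev CalkinAlgebra : Type _ := (compactOperatorIdeal 𝕜 E).ringCon.Quotient

def calkinMap : (E →L[𝕜] E) →ₐ[𝕜] CalkinAlgebra 𝕜 E := RingCon.mkₐ 𝕜 _

variable {𝕜 E}

lemma calkinMap_eq_calkinMap_iff {S T : E →L[𝕜] E} :
    calkinMap 𝕜 E S = calkinMap 𝕜 E T ↔ IsCompactOperator (S - T) := by
  rw [calkinMap, RingCon.mkₐ_apply, RingCon.mkₐ_apply, RingCon.eq, TwoSidedIdeal.rel_iff]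
  exact TwoSidedIdeal.mem_mk' ..

lemma calkinMap_surjective : Function.Surjective (calkinMap 𝕜 E) := RingCon.mkₐ_surjective _

end Calkin

lemma InEssentialSpectrum.mem_spectrum_calkinMap {E : Type*} [NormedAddCommGroup E]
    [InnerProductSpace ℂ E] {T : E →L[ℂ] E} {z : ℂ} (hz : InEssentialSpectrum T z) :
    z ∈ spectrum ℂ (calkinMap ℂ E T) := by
  contrapose! hz
  rw [spectrum.notMem_iff] at hz
  obtain ⟨u, hu⟩ : IsUnit (calkinMap ℂ E (T - z • 1)) := by
    simpa [Algebra.algebraMap_eq_smul_one] using hz.neg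
  obtain ⟨S, hS⟩ := calkinMap_surjective (↑u⁻¹ : CalkinAlgebra ℂ E)
  refine fun h => h ⟨S, ?_, ?_⟩
  · rw [← calkinMap_eq_calkinMap_iff, ← mul_def, map_mul, hS, ← hu, map_one, u.inv_mul]
  · rw [← calkinMap_eq_calkinMap_iff, ← mul_def, map_mul, hS, ← hu, map_one, u.mul_inv]

lemma ContinuousLinearMap.IsPositive.ofReal_notMem_spectrum {E : Type*} [NormedAddCommGroup E]
    [InnerProductSpace ℂ E] [CompleteSpace E] {T : E →L[ℂ] E} (hT : T.IsPositive) {r : ℝ}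
    (hr : r < 0) : (r : ℂ) ∉ spectrum ℂ T := by
  rw [← Complex.coe_algebraMap, spectrum.algebraMap_mem_iff]
  exact fun h => hr.not_ge (spectrum_nonneg_of_nonneg ((nonneg_iff_isPositive T).mpr hT) h)

lemma TotallyBounded.image_of_forall_dist_lt {α β γ : Type*} [PseudoMetricSpace β]
    [PseudoMetricSpace γ] {s : Set α} {f : α → β} {g : α → γ} (hg : TotallyBounded (g '' s))
    (h : ∀ ε > 0, ∃ δ > 0, ∀ x ∈ s, ∀ y ∈ s, dist (g x) (g y) < δ → dist (f x) (f y) < ε) :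
    TotallyBounded (f '' s) := by
  rw [Metric.totallyBounded_iff]
  intro ε hε
  obtain ⟨δ, hδ, hfg⟩ := h ε hε
  obtain ⟨u, hus, hufin, hcover⟩ := Set.exists_subset_image_finite_and.mp
    (hg.exists_subset (Metric.dist_mem_uniformity hδ))
  refine ⟨f '' u, hufin.image f, ?_⟩
  rintro _ ⟨y, hy, rfl⟩
  obtain ⟨_, ⟨x, hxu, rfl⟩, hyx⟩ := Set.mem_iUnion₂.mp (hcover (Set.mem_image_of_mem g hy))
  exact Set.mem_iUnion₂.mpr ⟨f x, Set.mem_image_of_mem f hxu, hfg _ hy _ (hus hxu) hyx⟩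

section Hilbert

variable {E F : Type*} [NormedAddCommGroup E] [InnerProductSpace ℂ E] [CompleteSpace E]
  [NormedAddCommGroup F] [InnerProductSpace ℂ F]

lemma ContinuousLinearMap.comp_starProjection_orthogonal_ker (X : E →L[ℂ] F) :
    X ∘L (LinearMap.ker (X : E →ₗ[ℂ] F))ᗮ.starProjection = X := by
  ext u
  have hker := (LinearMap.ker (X : E →ₗ[ℂ] F))ᗮ.sub_starProjection_mem_orthogonal u
  rw [Submodule.orthogonal_orthogonal_eq_closure, X.isClosed_ker.submodule_topologicalClosure_eq,
    LinearMap.mem_ker, map_sub, sub_eq_zero] at hker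
  exact hker.symm

variable [CompleteSpace F]

lemma IsPartialIsometry.adjoint_comp_self_eq_starProjection {X : E →L[ℂ] F}
    (hX : IsPartialIsometry X) :
    X† ∘L X = (LinearMap.ker (X : E →ₗ[ℂ] F))ᗮ.starProjection := by
  set V := (LinearMap.ker (X : E →ₗ[ℂ] F))ᗮ
  have hiso : (X ∘L V.subtypeL)† ∘L (X ∘L V.subtypeL) = 1 :=
    (norm_map_iff_adjoint_comp_self _).mp fun v => hX v v.2
  calc X† ∘L X = (X ∘L V.starProjection)† ∘L (X ∘L V.starProjection) := by
        rw [X.comp_starProjection_orthogonal_ker]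
    _ = V.subtypeL ∘L ((X ∘L V.subtypeL)† ∘L (X ∘L V.subtypeL)) ∘L
          V.orthogonalProjectionOnto := by
        simp only [Submodule.starProjection, adjoint_comp, V.adjoint_orthogonalProjectionOnto,
          comp_assoc]
    _ = V.starProjection := by rw [hiso]; rfl

lemma IsPartialIsometry.isIdempotentElem_adjoint_comp_self {X : E →L[ℂ] F}
    (hX : IsPartialIsometry X) : IsIdempotentElem (X† ∘L X) := by
  rw [hX.adjoint_comp_self_eq_starProjection]
  exact Submodule.isIdempotentElem_starProjection _

lemma ContinuousLinearMap.norm_apply_sq_le (B : E →L[ℂ] F) (v : E) :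
    ‖B v‖ ^ 2 ≤ ‖(B† ∘L B) v‖ * ‖v‖ := by
  rw [apply_norm_sq_eq_inner_adjoint_left]
  exact (RCLike.re_le_norm _).trans (norm_inner_le_norm _ _)

lemma IsCompactOperator.of_adjoint_comp_self {B : E →L[ℂ] F}
    (hB : IsCompactOperator (B† ∘L B)) : IsCompactOperator B := by
  refine (isCompactOperator_iff_isCompact_closure_image_closedBall (B : E →ₗ[ℂ] F)
    one_pos).mpr ?_
  have hBB : TotallyBounded ((B† ∘L B) '' Metric.closedBall 0 1) :=
    (hB.isCompact_closure_image_closedBall 1).totallyBounded.subset subset_closure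
  refine (hBB.image_of_forall_dist_lt fun ε hε => ?_).closure.isCompact_of_isClosed
    isClosed_closure
  refine ⟨ε ^ 2 / 2, by positivity, fun x hx y hy hxy => ?_⟩
  rw [mem_closedBall_zero_iff] at hx hy
  rw [dist_eq_norm, ← map_sub] at hxy ⊢
  have hxy2 : ‖x - y‖ ≤ 2 := (norm_sub_le x y).trans (by linarith)
  have := B.norm_apply_sq_le (x - y)
  show ‖B (x - y)‖ < ε
  nlinarith [norm_nonneg (B (x - y)), norm_nonneg ((B† ∘L B) (x - y))]

lemma IsCompactOperator.adjoint {A : E →L[ℂ] F} (hA : IsCompactOperator A) :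
    IsCompactOperator (A†) := by
  refine .of_adjoint_comp_self ?_
  rw [adjoint_adjoint, coe_comp]
  exact hA.comp_clm _

lemma IsCompactOperator.adjoint_comp_self_sub_adjoint_comp_self {A B : E →L[ℂ] F}
    (h : IsCompactOperator (A - B)) :
    IsCompactOperator (A† ∘L A - B† ∘L B) := by
  have : A† ∘L A - B† ∘L B = A† ∘L (A - B) + (A - B)† ∘L B := by
    simp only [comp_sub, map_sub, sub_comp]; abel
  rw [this, FunLike.coe_add, coe_comp, coe_comp]
  exact (h.clm_comp _).add (h.adjoint.comp_clm _)

end Hilbert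

lemma spectrum_subset_of_isIdempotentElem_sq {𝕜 A : Type*} [Field 𝕜] [Ring A] [Algebra 𝕜 A]
    {a : A} (ha : IsIdempotentElem (a ^ 2)) (hneg : (-1 : 𝕜) ∉ spectrum 𝕜 a) :
    spectrum 𝕜 a ⊆ {0, 1} := by
  intro z hz
  rcases ha.spectrum_subset 𝕜 (spectrum.pow_mem_pow a 2 hz) with hz2 | hz2
  · exact .inl (pow_eq_zero_iff two_ne_zero |>.mp hz2)
  · rcases sq_eq_one_iff.mp hz2 with rfl | rfl
    · exact .inr rfl
    · exact absurd hz hneg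

theorem stmt_6_general {H : Type*} [NormedAddCommGroup H] [InnerProductSpace ℂ H]
    [CompleteSpace H] (F U X : L2C →L[ℂ] H)
    (hpolar : IsPolarDecomp F U)
    (hX : IsPartialIsometry X) (hcpt : IsCompactOperator ⇑(F - X)) :
    ∀ z : ℂ, InEssentialSpectrum (ContinuousLinearMap.adjoint U ∘L F) z → z = 0 ∨ z = 1 := by
  obtain ⟨-, -, hpos, hF⟩ := hpolar
  set T := U† ∘L F
  have hTT : T * T = F† ∘L F := by
    calc T * T = (U ∘L T)† ∘L F := by rw [adjoint_comp, hpos.isSelfAdjoint.adjoint_eq]; rfl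
      _ = F† ∘L F := by rw [← hF]
  have hsq : calkinMap ℂ L2C T ^ 2 = calkinMap ℂ L2C (X† ∘L X) := by
    rw [← map_pow, sq, hTT, calkinMap_eq_calkinMap_iff]
    exact hcpt.adjoint_comp_self_sub_adjoint_comp_self
  have hneg : (-1 : ℂ) ∉ spectrum ℂ (calkinMap ℂ L2C T) := fun h =>
    hpos.ofReal_notMem_spectrum (r := -1) (by norm_num)
      (by simpa using AlgHom.spectrum_apply_subset _ _ h)
  intro z hz
  exact spectrum_subset_of_isIdempotentElem_sq (hsq ▸ hX.isIdempotentElem_adjoint_comp_self.map _)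
    hneg hz.mem_spectrum_calkinMap

/-- If `F` has closed range, `F = U|F|` is its polar decomposition, and `X` is a partial
isometry with `F - X` compact, then the essential spectrum of `|F| = U* F` is contained
in `{0, 1}`. -/
theorem stmt_6 {H : Type*} [NormedAddCommGroup H] [InnerProductSpace ℂ H]
    [CompleteSpace H] (F U X : L2C →L[ℂ] H)
    (hran : IsClosed (Set.range F)) (hpolar : IsPolarDecomp F U)
    (hX : IsPartialIsometry X) (hcpt : IsCompactOperator ⇑(F - X)) :
    ∀ z : ℂ, InEssentialSpectrum (ContinuousLinearMap.adjoint U ∘L F) z → z = 0 ∨ z = 1 :=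
  stmt_6_general F U X hpolar hX hcpt

end
end

section
/- Let F be a bounded operator with closed range on a separable Hilbert space such that F − X is Hilbert–Schmidt for some partial isometry X. Let F = U|F| be the polar decomposition. Then F − U is Hilbert–Schmidt. -/
/-!
Write `T = U* F = |F|`, `P` and `Q` for the orthogonal projections onto `(ker F)ᗮ` and
`(ker X)ᗮ`. Then `F - U = U (T - P)`, and as `T ≥ 0` and `T P = T`,
`‖(T - P) v‖ ≤ ‖(1 + T)(T - P) v‖ = ‖(T² - P) v‖`. Since `T² = F* F` and `X* X = Q`,
`T² - P = (F* F - X* X) + (Q - P)`. The first summand is `F* (F - X) + (X* (F - X))*`. For the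
second, `Q - P = Q (1 - P) - (1 - Q) P`, where `Q (1 - P) = X* (X - F) (1 - P)`, and
`P (1 - Q) = ((1 - Q) P)*` is dominated by `F (1 - Q) = (F - X)(1 - Q)` because `F` has
closed range.
-/

noncomputable section

open ContinuousLinearMap

lemma norm_sq_eq_tsum_norm_sq_apply (w : L2C) : ‖w‖ ^ 2 = ∑' j, ‖w j‖ ^ 2 := by
  simpa using lp.norm_rpow_eq_tsum (p := 2) (by norm_num) w

lemma summable_norm_sq_apply (w : L2C) : Summable fun j => ‖w j‖ ^ 2 := by
  simpa using (lp.memℓp w).summable (p := 2) (by norm_num)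

lemma apply_eq_inner_stdVec (w : L2C) (j : ℕ) : w j = inner ℂ (stdVec j) w := by
  simp [stdVec, lp.inner_single_left]

namespace IsHS

variable {H K : Type*} [NormedAddCommGroup H] [InnerProductSpace ℂ H]
  [NormedAddCommGroup K] [InnerProductSpace ℂ K] {A B : L2C →L[ℂ] H}

lemma of_norm_apply_le {C : L2C →L[ℂ] K} (c : ℝ) (h : ∀ v, ‖A v‖ ≤ c * ‖C v‖) (hC : IsHS C) :
    IsHS A := by
  refine (hC.mul_left (c ^ 2)).of_nonneg_of_le (fun i => by positivity) fun i => ?_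
  simpa [mul_pow] using pow_le_pow_left₀ (norm_nonneg _) (h (stdVec i)) 2

lemma of_norm_apply_le_add {C : L2C →L[ℂ] K} (h : ∀ v, ‖C v‖ ≤ ‖A v‖ + ‖B v‖)
    (hA : IsHS A) (hB : IsHS B) : IsHS C := by
  refine ((hA.add hB).mul_left 2).of_nonneg_of_le (fun i => by positivity) fun i => ?_
  have := pow_le_pow_left₀ (norm_nonneg _) (h (stdVec i)) 2
  nlinarith [sq_nonneg (‖A (stdVec i)‖ - ‖B (stdVec i)‖)]

lemma add (hA : IsHS A) (hB : IsHS B) : IsHS (A + B) :=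
  of_norm_apply_le_add (fun v => norm_add_le (A v) (B v)) hA hB

lemma sub (hA : IsHS A) (hB : IsHS B) : IsHS (A - B) :=
  of_norm_apply_le_add (fun v => norm_sub_le (A v) (B v)) hA hB

lemma comp_left (hA : IsHS A) (C : H →L[ℂ] K) : IsHS (C ∘L A) :=
  hA.of_norm_apply_le ‖C‖ fun v => C.le_opNorm (A v)

end IsHS

lemma isHS_iff_summable_norm_sq_apply_stdVec_apply (A : L2C →L[ℂ] L2C) :
    IsHS A ↔ Summable fun p : ℕ × ℕ => ‖A (stdVec p.1) p.2‖ ^ 2 := by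
  rw [summable_prod_of_nonneg fun p => by positivity]
  simp only [← norm_sq_eq_tsum_norm_sq_apply, summable_norm_sq_apply, implies_true, true_and]
  rfl

lemma norm_adjoint_apply_stdVec_apply (A : L2C →L[ℂ] L2C) (i j : ℕ) :
    ‖adjoint A (stdVec i) j‖ = ‖A (stdVec j) i‖ := by
  rw [apply_eq_inner_stdVec, apply_eq_inner_stdVec, adjoint_inner_right, norm_inner_symm]

lemma IsHS.adjoint {A : L2C →L[ℂ] L2C} (hA : IsHS A) : IsHS (adjoint A) := by
  rw [isHS_iff_summable_norm_sq_apply_stdVec_apply] at hA ⊢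
  simp only [norm_adjoint_apply_stdVec_apply]
  exact (Equiv.prodComm ℕ ℕ).summable_iff.mpr hA

lemma ContinuousLinearMap.exists_isSelfAdjoint_norm_apply_eq {E G : Type*}
    [NormedAddCommGroup E] [InnerProductSpace ℂ E] [CompleteSpace E]
    [NormedAddCommGroup G] [InnerProductSpace ℂ G] [CompleteSpace G] (A : E →L[ℂ] G) :
    ∃ S : E →L[ℂ] E, IsSelfAdjoint S ∧ ∀ v, ‖S v‖ = ‖A v‖ := by
  set S := CFC.sqrt (adjoint A ∘L A)
  have hS : IsSelfAdjoint S := (CFC.sqrt_nonneg _).isSelfAdjoint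
  have hSS : adjoint S ∘L S = adjoint A ∘L A := by
    rw [hS.adjoint_eq]
    exact CFC.sqrt_mul_sqrt_self _ ((nonneg_iff_isPositive _).mpr (isPositive_adjoint_comp_self A))
  refine ⟨S, hS, fun v => ?_⟩
  rw [apply_norm_eq_sqrt_inner_adjoint_left, hSS, ← apply_norm_eq_sqrt_inner_adjoint_left]

/-- With `‖S v‖ = ‖A v‖` and `S` self-adjoint on `ℓ²`, `S ∘ B = (B* S)*` is Hilbert–Schmidt. -/
lemma IsHS.comp_right {H : Type*} [NormedAddCommGroup H] [InnerProductSpace ℂ H]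
    [CompleteSpace H] {A : L2C →L[ℂ] H} (hA : IsHS A) (B : L2C →L[ℂ] L2C) : IsHS (A ∘L B) := by
  obtain ⟨S, hS, hnorm⟩ := A.exists_isSelfAdjoint_norm_apply_eq
  have hS_hs : IsHS S := hA.of_norm_apply_le 1 fun v => by simp [hnorm]
  have hSB : IsHS (S ∘L B) := by
    have := (hS_hs.comp_left (ContinuousLinearMap.adjoint B)).adjoint
    rwa [adjoint_comp, adjoint_adjoint, hS.adjoint_eq] at this
  exact hSB.of_norm_apply_le 1 fun v => by simp [hnorm]

section Operators

variable {E G : Type*} [NormedAddCommGroup E] [InnerProductSpace ℂ E]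
  [NormedAddCommGroup G] [InnerProductSpace ℂ G]

lemma ContinuousLinearMap.IsPositive.norm_le_norm_add_apply {T : E →L[ℂ] E} (hT : T.IsPositive)
    (w : E) : ‖w‖ ≤ ‖w + T w‖ := by
  have key : ‖w‖ ^ 2 ≤ ‖w + T w‖ * ‖w‖ :=
    calc ‖w‖ ^ 2 = RCLike.re (inner ℂ w w) := (inner_self_eq_norm_sq w).symm
      _ ≤ RCLike.re (inner ℂ w w) + RCLike.re (inner ℂ (T w) w) :=
        le_add_of_nonneg_right (hT.re_inner_nonneg_left w)
      _ = RCLike.re (inner ℂ (w + T w) w) := by rw [inner_add_left, map_add]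
      _ ≤ ‖w + T w‖ * ‖w‖ := (RCLike.re_le_norm _).trans (norm_inner_le_norm _ _)
  rcases (norm_nonneg w).eq_or_lt with hw | hw
  · rw [← hw]; exact norm_nonneg _
  · nlinarith

lemma ContinuousLinearMap.IsPositive.norm_sub_apply_le {T P : E →L[ℂ] E} (hT : T.IsPositive)
    (hTP : T ∘L P = T) (v : E) : ‖(T - P) v‖ ≤ ‖(T ∘L T - P) v‖ := by
  have h : (T - P) v + T ((T - P) v) = (T ∘L T - P) v := by
    have hTPv : T (P v) = T v := congr($hTP v)
    simp only [sub_apply, comp_apply, map_sub, hTPv]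
    abel
  rw [← h]
  exact hT.norm_le_norm_add_apply _

variable [CompleteSpace E]

lemma ContinuousLinearMap.apply_starProjection_ker_orthogonal (X : E →L[ℂ] G) (v : E) :
    X ((LinearMap.ker (X : E →ₗ[ℂ] G))ᗮ.starProjection v) = X v := by
  have h := (LinearMap.ker (X : E →ₗ[ℂ] G))ᗮ.sub_starProjection_mem_orthogonal v
  rw [Submodule.orthogonal_orthogonal, LinearMap.mem_ker, coe_coe, map_sub, sub_eq_zero] at h
  exact h.symm

lemma ContinuousLinearMap.comp_starProjection_ker_orthogonal (X : E →L[ℂ] G) :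
    X ∘L (LinearMap.ker (X : E →ₗ[ℂ] G))ᗮ.starProjection = X :=
  ContinuousLinearMap.ext X.apply_starProjection_ker_orthogonal

lemma IsPartialIsometry.adjoint_comp_self [CompleteSpace G] {X : E →L[ℂ] G}
    (hX : IsPartialIsometry X) :
    adjoint X ∘L X = (LinearMap.ker (X : E →ₗ[ℂ] G))ᗮ.starProjection := by
  set K := (LinearMap.ker (X : E →ₗ[ℂ] G))ᗮ
  let XK : K →ₗᵢ[ℂ] G := ⟨X.toLinearMap ∘ₗ K.subtype, fun v => hX v v.2⟩
  refine ContinuousLinearMap.ext fun v => ext_inner_right ℂ fun w => ?_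
  calc inner ℂ ((adjoint X ∘L X) v) w
      = inner ℂ (X (K.starProjection v)) (X (K.starProjection w)) := by
        rw [comp_apply, adjoint_inner_left, X.apply_starProjection_ker_orthogonal,
          X.apply_starProjection_ker_orthogonal]
    _ = inner ℂ (K.starProjection v) (K.starProjection w) :=
        XK.inner_map_map (K.orthogonalProjectionOnto v) (K.orthogonalProjectionOnto w)
    _ = inner ℂ (K.starProjection v) w := by
        rw [← Submodule.inner_starProjection_left_eq_right,
          K.starProjection_eq_self_iff.mpr (K.starProjection_apply_mem v)]

lemma ContinuousLinearMap.exists_norm_starProjection_ker_orthogonal_le [CompleteSpace G]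
    (F : E →L[ℂ] G) (hF : IsClosed (Set.range F)) :
    ∃ C : ℝ, ∀ v, ‖(LinearMap.ker (F : E →ₗ[ℂ] G))ᗮ.starProjection v‖ ≤ C * ‖F v‖ := by
  set K := (LinearMap.ker (F : E →ₗ[ℂ] G))ᗮ
  set FK : K →L[ℂ] G := F ∘L K.subtypeL
  have hinj : Function.Injective FK := by
    refine (injective_iff_map_eq_zero FK).mpr fun v hv => Subtype.ext ?_
    exact (Submodule.mem_orthogonal' _ _).mp v.2 v hv |> inner_self_eq_zero.mp
  have hrange : Set.range FK = Set.range F := by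
    refine Set.Subset.antisymm (fun _ ⟨v, hv⟩ => ⟨v, hv⟩) ?_
    rintro _ ⟨v, rfl⟩
    exact ⟨K.orthogonalProjectionOnto v, F.apply_starProjection_ker_orthogonal v⟩
  obtain ⟨C, hC⟩ := FK.antilipschitz_of_injective_of_isClosed_range hinj (hrange ▸ hF)
  refine ⟨C, fun v => ?_⟩
  have hFK : FK (K.orthogonalProjectionOnto v) = F v := F.apply_starProjection_ker_orthogonal v
  have := hC.le_mul_norm (map_zero FK) (K.orthogonalProjectionOnto v)
  rwa [hFK] at this

end Operators

section HilbertSchmidtPerturbation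

variable {H : Type*} [NormedAddCommGroup H] [InnerProductSpace ℂ H] [CompleteSpace H]
  {F X : L2C →L[ℂ] H}

lemma isHS_adjoint_comp_self_sub_adjoint_comp_self (h : IsHS (F - X)) :
    IsHS (adjoint F ∘L F - adjoint X ∘L X) := by
  have key : adjoint F ∘L (F - X) + adjoint (adjoint X ∘L (F - X))
      = adjoint F ∘L F - adjoint X ∘L X := by
    rw [adjoint_comp, adjoint_adjoint, map_sub, comp_sub, sub_comp]
    abel
  exact key ▸ (h.comp_left _).add (h.comp_left _).adjoint

/-- On `ker F` we have `X* X = X* (X - F)`. -/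
lemma IsPartialIsometry.isHS_starProjection_comp_starProjection (hX : IsPartialIsometry X)
    (h : IsHS (F - X)) :
    IsHS ((LinearMap.ker (X : L2C →ₗ[ℂ] H))ᗮ.starProjection ∘L
      (LinearMap.ker (F : L2C →ₗ[ℂ] H)).starProjection) := by
  have hF : F ∘L (LinearMap.ker (F : L2C →ₗ[ℂ] H)).starProjection = 0 :=
    ContinuousLinearMap.ext (LinearMap.ker (F : L2C →ₗ[ℂ] H)).starProjection_apply_mem
  have key : (LinearMap.ker (X : L2C →ₗ[ℂ] H))ᗮ.starProjection ∘L
      (LinearMap.ker (F : L2C →ₗ[ℂ] H)).starProjection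
      = (-adjoint X) ∘L ((F - X) ∘L (LinearMap.ker (F : L2C →ₗ[ℂ] H)).starProjection) := by
    rw [← hX.adjoint_comp_self, sub_comp, hF, zero_sub, comp_neg, neg_comp, neg_neg, comp_assoc]
  rw [key]
  exact (h.comp_right _).comp_left _

lemma isHS_starProjection_comp_starProjection_of_isClosed_range (hF : IsClosed (Set.range F))
    (h : IsHS (F - X)) :
    IsHS ((LinearMap.ker (X : L2C →ₗ[ℂ] H)).starProjection ∘L
      (LinearMap.ker (F : L2C →ₗ[ℂ] H))ᗮ.starProjection) := by
  obtain ⟨C, hC⟩ := F.exists_norm_starProjection_ker_orthogonal_le hF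
  have key : IsHS ((LinearMap.ker (F : L2C →ₗ[ℂ] H))ᗮ.starProjection ∘L
      (LinearMap.ker (X : L2C →ₗ[ℂ] H)).starProjection) := by
    refine (h.comp_right (LinearMap.ker (X : L2C →ₗ[ℂ] H)).starProjection).of_norm_apply_le C
      fun v => ?_
    have hXv : X ((LinearMap.ker (X : L2C →ₗ[ℂ] H)).starProjection v) = 0 :=
      (LinearMap.ker (X : L2C →ₗ[ℂ] H)).starProjection_apply_mem v
    simpa [hXv] using hC ((LinearMap.ker (X : L2C →ₗ[ℂ] H)).starProjection v)
  simpa [adjoint_comp, (isSelfAdjoint_starProjection _).adjoint_eq] using key.adjoint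

lemma isHS_starProjection_sub_starProjection (hF : IsClosed (Set.range F))
    (hX : IsPartialIsometry X) (h : IsHS (F - X)) :
    IsHS ((LinearMap.ker (X : L2C →ₗ[ℂ] H))ᗮ.starProjection -
      (LinearMap.ker (F : L2C →ₗ[ℂ] H))ᗮ.starProjection) := by
  have key := (hX.isHS_starProjection_comp_starProjection h).sub
    (isHS_starProjection_comp_starProjection_of_isClosed_range hF h)
  convert key using 1
  rw [Submodule.starProjection_orthogonal', Submodule.starProjection_orthogonal']
  ext v
  simp

end HilbertSchmidtPerturbation

namespace IsPolarDecomp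

variable {H : Type*} [NormedAddCommGroup H] [InnerProductSpace ℂ H] [CompleteSpace H]
  {F U : L2C →L[ℂ] H}

lemma abs_comp_abs (h : IsPolarDecomp F U) :
    (adjoint U ∘L F) ∘L (adjoint U ∘L F) = adjoint F ∘L F := by
  obtain ⟨-, -, hT, hF⟩ := h
  nth_rewrite 3 [hF]
  rw [adjoint_comp, hT.isSelfAdjoint.adjoint_eq]
  simp only [comp_assoc]

lemma sub_eq_comp (h : IsPolarDecomp F U) :
    F - U = U ∘L (adjoint U ∘L F - (LinearMap.ker (F : L2C →ₗ[ℂ] H))ᗮ.starProjection) := by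
  obtain ⟨-, hker, -, hF⟩ := h
  have hU := U.comp_starProjection_ker_orthogonal
  simp only [hker] at hU
  rw [comp_sub, hU, ← hF]

end IsPolarDecomp

/-- If `F` has closed range and `F - X` is Hilbert–Schmidt for some partial isometry
`X`, then `F - U` is Hilbert–Schmidt, where `F = U|F|` is the polar decomposition. -/
theorem stmt_10 {H : Type*} [NormedAddCommGroup H] [InnerProductSpace ℂ H]
    [CompleteSpace H] (F U X : L2C →L[ℂ] H)
    (hran : IsClosed (Set.range F)) (hpolar : IsPolarDecomp F U)
    (hX : IsPartialIsometry X) (hhs : IsHS (F - X)) :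
    IsHS (F - U) := by
  set T := adjoint U ∘L F
  set P := (LinearMap.ker (F : L2C →ₗ[ℂ] H))ᗮ.starProjection
  have hT2 : IsHS (T ∘L T - P) := by
    have := (isHS_adjoint_comp_self_sub_adjoint_comp_self hhs).add
      (isHS_starProjection_sub_starProjection hran hX hhs)
    rwa [hX.adjoint_comp_self, sub_add_sub_cancel, ← hpolar.abs_comp_abs] at this
  have hTpos : T.IsPositive := hpolar.2.2.1
  have hTP : T ∘L P = T := by rw [comp_assoc, F.comp_starProjection_ker_orthogonal]
  have hT : IsHS (T - P) :=
    hT2.of_norm_apply_le 1 fun v => by simpa only [one_mul] using hTpos.norm_sub_apply_le hTP v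
  rw [hpolar.sub_eq_comp]
  exact hT.comp_left U

end
end

section
/- Let A be an m × n complex matrix with nonzero singular values s_1 ≥ … ≥ s_p > 1/2 ≥ s_{p+1} ≥ … ≥ s_q, and let A = V Σ W* be a singular value decomposition. Define the partial isometry S_p = V (I_p ⊕ 0) W* (truncating to the top p singular directions). Then ‖A − S_p‖₂ ≤ ‖A − Y‖₂ for every m × n partial isometry Y, where ‖·‖₂ is the Frobenius (Hilbert–Schmidt) norm. -/
/-!
Both sides are unitarily invariant, so with the partial isometry `B = Vᴴ Y W` it suffices to
compare `S - T` with `S - B`, where `S` is the rectangular diagonal of singular values and `T`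
rounds each of them to `0` or `1`. Entrywise, `|s - t|² + |b|² ≤ |s - b|² + |b|` when `|b| ≤ 1`
and `t` is `s` rounded to `{0, 1}` (the `|b|` only on the diagonal), so it remains to show
`∑ᵢ |Bᵢᵢ| ≤ ‖B‖²`. This follows from `B = B (BᴴB)`: each `|Bᵢⱼ|` is at most the mean of the
squared norms of row `i` of `B` and of column `j` of `BᴴB`, and both families sum to `‖B‖²`.
-/

open scoped Matrix ComplexOrder
open Finset

theorem Finset.sum_sum_ite_le_sum {α β : Type*} [Fintype α] [Fintype β] (R : α → β → Prop)
    [DecidableRel R] (hR : ∀ a b₁ b₂, R a b₁ → R a b₂ → b₁ = b₂) {f : α → ℝ} (hf : ∀ a, 0 ≤ f a) :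
    ∑ a, ∑ b, (if R a b then f a else 0) ≤ ∑ a, f a := by
  refine sum_le_sum fun a _ => ?_
  rw [← sum_filter, sum_const, nsmul_eq_mul]
  have : #(univ.filter (R a)) ≤ 1 :=
    card_le_one.2 fun b₁ h₁ b₂ h₂ => hR a b₁ b₂ (mem_filter.1 h₁).2 (mem_filter.1 h₂).2
  exact mul_le_of_le_one_left (hf a) (by exact_mod_cast this)

namespace Matrix

variable {m n 𝕜 : Type*} [Fintype m] [RCLike 𝕜]

theorem sum_norm_sq_apply_eq_re_conjTranspose_mul_self_apply (M : Matrix m n 𝕜) (j : n) :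
    ∑ i, ‖M i j‖ ^ 2 = RCLike.re ((Mᴴ * M) j j) := by
  simp only [mul_apply, conjTranspose_apply, RCLike.star_def, RCLike.conj_mul, map_sum,
    ← RCLike.ofReal_pow, RCLike.ofReal_re]

variable [Fintype n]

theorem sum_sum_norm_sq_eq_re_trace (M : Matrix m n 𝕜) :
    ∑ i, ∑ j, ‖M i j‖ ^ 2 = RCLike.re (Mᴴ * M).trace := by
  rw [sum_comm]
  simp only [trace, diag, map_sum, sum_norm_sq_apply_eq_re_conjTranspose_mul_self_apply]

section PartialIsometry

variable {B : Matrix m n 𝕜}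

theorem mul_conjTranspose_mul_self_of_isIdempotentElem (hB : IsIdempotentElem (Bᴴ * B)) :
    B * (Bᴴ * B) = B := by
  classical
  have hP : (Bᴴ * B) * (1 - Bᴴ * B) = 0 := by rw [mul_sub, mul_one, hB.eq, sub_self]
  have h : (B * (1 - Bᴴ * B))ᴴ * (B * (1 - Bᴴ * B)) = 0 := by
    rw [conjTranspose_mul, Matrix.mul_assoc, ← Matrix.mul_assoc Bᴴ, hP, Matrix.mul_zero]
  have := conjTranspose_mul_self_eq_zero.1 h
  rwa [Matrix.mul_sub, Matrix.mul_one, sub_eq_zero, eq_comm] at this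

theorem sum_norm_sq_conjTranspose_mul_self_apply_of_isIdempotentElem
    (hB : IsIdempotentElem (Bᴴ * B)) (j : n) :
    ∑ l, ‖(Bᴴ * B) l j‖ ^ 2 = ∑ i, ‖B i j‖ ^ 2 := by
  rw [sum_norm_sq_apply_eq_re_conjTranspose_mul_self_apply,
    sum_norm_sq_apply_eq_re_conjTranspose_mul_self_apply,
    (isHermitian_conjTranspose_mul_self B).eq, hB.eq]

theorem norm_apply_le_one_of_isIdempotentElem (hB : IsIdempotentElem (Bᴴ * B)) (i : m) (j : n) :
    ‖B i j‖ ≤ 1 := by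
  set c := ∑ k, ‖B k j‖ ^ 2
  have hc : c ≤ 1 := by
    have h₁ : c ≤ ‖(Bᴴ * B) j j‖ :=
      (sum_norm_sq_apply_eq_re_conjTranspose_mul_self_apply B j).trans_le (RCLike.re_le_norm _)
    have h₂ : ‖(Bᴴ * B) j j‖ ^ 2 ≤ c :=
      (single_le_sum (fun l _ => sq_nonneg ‖(Bᴴ * B) l j‖) (mem_univ j)).trans
        (sum_norm_sq_conjTranspose_mul_self_apply_of_isIdempotentElem hB j).le
    nlinarith [norm_nonneg ((Bᴴ * B) j j)]
  have : ‖B i j‖ ^ 2 ≤ 1 :=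
    (single_le_sum (fun k _ => sq_nonneg ‖B k j‖) (mem_univ i)).trans hc
  exact (sq_le_one_iff₀ (norm_nonneg _)).1 this

theorem sum_sum_ite_norm_le_of_isIdempotentElem (hB : IsIdempotentElem (Bᴴ * B))
    (R : m → n → Prop) [DecidableRel R] (hrow : ∀ i j₁ j₂, R i j₁ → R i j₂ → j₁ = j₂)
    (hcol : ∀ i₁ i₂ j, R i₁ j → R i₂ j → i₁ = i₂) :
    ∑ i, ∑ j, (if R i j then ‖B i j‖ else 0) ≤ ∑ i, ∑ j, ‖B i j‖ ^ 2 := by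
  set a : m → ℝ := fun i => ∑ l, ‖B i l‖ ^ 2
  set b : n → ℝ := fun j => ∑ l, ‖(Bᴴ * B) l j‖ ^ 2
  have hentry : ∀ i j, ‖B i j‖ ≤ (a i + b j) / 2 := by
    intro i j
    calc ‖B i j‖ = ‖∑ l, B i l * (Bᴴ * B) l j‖ := by
          rw [← mul_apply, mul_conjTranspose_mul_self_of_isIdempotentElem hB]
      _ ≤ ∑ l, ‖B i l‖ * ‖(Bᴴ * B) l j‖ := (norm_sum_le _ _).trans_eq (by simp_rw [norm_mul])
      _ ≤ ∑ l, (‖B i l‖ ^ 2 + ‖(Bᴴ * B) l j‖ ^ 2) / 2 :=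
          sum_le_sum fun l _ => by nlinarith [sq_nonneg (‖B i l‖ - ‖(Bᴴ * B) l j‖)]
      _ = (a i + b j) / 2 := by rw [← sum_div, sum_add_distrib]
  have ha := sum_sum_ite_le_sum R hrow (f := a) fun i => sum_nonneg fun _ _ => sq_nonneg _
  have hb := sum_sum_ite_le_sum (fun j i => R i j) (fun j i₁ i₂ h₁ h₂ => hcol i₁ i₂ j h₁ h₂)
    (f := b) fun j => sum_nonneg fun _ _ => sq_nonneg _
  have hb_sum : ∑ j, b j = ∑ i, a i := by
    simp only [b, sum_norm_sq_conjTranspose_mul_self_apply_of_isIdempotentElem hB]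
    exact sum_comm
  rw [sum_comm] at hb
  have hsplit : ∑ i, ∑ j, (if R i j then ‖B i j‖ else 0) ≤
      (∑ i, ∑ j, (if R i j then a i else 0) + ∑ i, ∑ j, (if R i j then b j else 0)) / 2 := by
    simp only [← sum_add_distrib, sum_div]
    refine sum_le_sum fun i _ => sum_le_sum fun j _ => ?_
    split_ifs
    · exact hentry i j
    · simp
  linarith

end PartialIsometry

variable [DecidableEq m] [DecidableEq n]

theorem sum_sum_norm_sq_unitary_mul_mul {U : Matrix m m 𝕜} (hU : U ∈ unitaryGroup m 𝕜)
    {W : Matrix n n 𝕜} (hW : W ∈ unitaryGroup n 𝕜) (M : Matrix m n 𝕜) :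
    ∑ i, ∑ j, ‖(U * M * W) i j‖ ^ 2 = ∑ i, ∑ j, ‖M i j‖ ^ 2 := by
  have hU' : Uᴴ * U = 1 := mem_unitaryGroup_iff'.1 hU
  have hW' : W * Wᴴ = 1 := mem_unitaryGroup_iff.1 hW
  rw [sum_sum_norm_sq_eq_re_trace, sum_sum_norm_sq_eq_re_trace]
  congr 1
  calc ((U * M * W)ᴴ * (U * M * W)).trace = (Mᴴ * (Uᴴ * U) * M * (W * Wᴴ)).trace := by
        simp only [conjTranspose_mul, Matrix.mul_assoc]
        rw [trace_mul_comm]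
        simp only [Matrix.mul_assoc]
    _ = (Mᴴ * M).trace := by rw [hU', hW', Matrix.mul_one, Matrix.mul_one]

theorem isIdempotentElem_conjTranspose_mul_self_unitary_mul_mul {U : Matrix m m 𝕜}
    (hU : U ∈ unitaryGroup m 𝕜) {W : Matrix n n 𝕜} (hW : W ∈ unitaryGroup n 𝕜)
    {Y : Matrix m n 𝕜} (hY : IsIdempotentElem (Yᴴ * Y)) :
    IsIdempotentElem ((U * Y * W)ᴴ * (U * Y * W)) := by
  have hU' : Uᴴ * U = 1 := mem_unitaryGroup_iff'.1 hU
  have hW' : W * Wᴴ = 1 := mem_unitaryGroup_iff.1 hW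
  have h : (U * Y * W)ᴴ * (U * Y * W) = Wᴴ * (Yᴴ * Y) * W := by
    simp only [conjTranspose_mul, Matrix.mul_assoc, ← Matrix.mul_assoc Uᴴ U, hU', Matrix.one_mul]
  rw [h, IsIdempotentElem]
  calc Wᴴ * (Yᴴ * Y) * W * (Wᴴ * (Yᴴ * Y) * W)
      = Wᴴ * ((Yᴴ * Y) * (W * Wᴴ) * (Yᴴ * Y)) * W := by simp only [Matrix.mul_assoc]
    _ = Wᴴ * (Yᴴ * Y) * W := by rw [hW', Matrix.mul_one, hY.eq]

end Matrix

theorem norm_ofReal_sub_ite_sq_add_norm_sq_le {𝕜 : Type*} [RCLike 𝕜] {s : ℝ} (hs : 0 ≤ s) {b : 𝕜}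
    (hb : ‖b‖ ≤ 1) :
    ‖(s : 𝕜) - (if 1 / 2 < s then 1 else 0)‖ ^ 2 + ‖b‖ ^ 2 ≤ ‖(s : 𝕜) - b‖ ^ 2 + ‖b‖ := by
  have hsb : ‖(s : 𝕜) - b‖ ^ 2 = s ^ 2 - 2 * s * RCLike.re b + ‖b‖ ^ 2 := by
    rw [@norm_sub_sq 𝕜, RCLike.inner_apply, RCLike.conj_ofReal, RCLike.re_mul_ofReal,
      RCLike.norm_ofReal, sq_abs]
    ring
  have hre := mul_le_mul_of_nonneg_left (RCLike.re_le_norm b) hs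
  split_ifs with h
  · rw [← RCLike.ofReal_one, ← RCLike.ofReal_sub, RCLike.norm_ofReal, sq_abs]
    nlinarith [mul_nonneg (sub_nonneg.2 h.le) (sub_nonneg.2 hb)]
  · rw [sub_zero, RCLike.norm_ofReal, sq_abs]
    nlinarith [mul_le_mul_of_nonneg_right (not_lt.1 h) (norm_nonneg b)]

theorem sum_sum_norm_sq_sub_truncation_le {m n : ℕ} (s : ℕ → ℝ) (hs0 : ∀ i, 0 ≤ s i) (p : ℕ)
    (hp : ∀ i < p, 1 / 2 < s i) (hp' : ∀ i, p ≤ i → s i ≤ 1 / 2)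
    {S T B : Matrix (Fin m) (Fin n) ℂ}
    (hS : S = Matrix.of fun i j => if i.val = j.val then Complex.ofReal (s i.val) else 0)
    (hT : T = Matrix.of fun i j => if i.val = j.val ∧ i.val < p then (1 : ℂ) else 0)
    (hB : IsIdempotentElem (Bᴴ * B)) :
    ∑ i, ∑ j, ‖(S - T) i j‖ ^ 2 ≤ ∑ i, ∑ j, ‖(S - B) i j‖ ^ 2 := by
  have hround : ∀ i, i < p ↔ 1 / 2 < s i :=
    fun i => ⟨hp i, fun h => not_le.1 fun hi => (hp' i hi).not_gt h⟩
  have hentry : ∀ i j, ‖(S - T) i j‖ ^ 2 + ‖B i j‖ ^ 2 ≤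
      ‖(S - B) i j‖ ^ 2 + if i.val = j.val then ‖B i j‖ else 0 := by
    intro i j
    by_cases hij : i.val = j.val
    · simpa [hS, hT, hij, hround] using norm_ofReal_sub_ite_sq_add_norm_sq_le (hs0 i)
        (Matrix.norm_apply_le_one_of_isIdempotentElem hB i j)
    · simp [hS, hT, hij]
  have hdiag := Matrix.sum_sum_ite_norm_le_of_isIdempotentElem hB (fun i j => i.val = j.val)
    (fun _ _ _ h₁ h₂ => Fin.ext (h₁.symm.trans h₂)) (fun _ _ _ h₁ h₂ => Fin.ext (h₁.trans h₂.symm))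
  have hsum := sum_le_sum fun i (_ : i ∈ univ) => sum_le_sum fun j (_ : j ∈ univ) => hentry i j
  simp only [sum_add_distrib] at hsum
  linarith

theorem stmt_15_general (m n : ℕ) (A : Matrix (Fin m) (Fin n) ℂ)
    (V : Matrix (Fin m) (Fin m) ℂ) (hV : V ∈ Matrix.unitaryGroup (Fin m) ℂ)
    (W : Matrix (Fin n) (Fin n) ℂ) (hW : W ∈ Matrix.unitaryGroup (Fin n) ℂ)
    (s : ℕ → ℝ) (hs0 : ∀ i, 0 ≤ s i)
    (p : ℕ) (hp : ∀ i < p, 1 / 2 < s i) (hp' : ∀ i, p ≤ i → s i ≤ 1 / 2)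
    (hA : A = V * Matrix.of (fun (i : Fin m) (j : Fin n) =>
      if i.val = j.val then Complex.ofReal (s i.val) else 0) * Wᴴ)
    (Sp : Matrix (Fin m) (Fin n) ℂ)
    (hSp : Sp = V * Matrix.of (fun (i : Fin m) (j : Fin n) =>
      if i.val = j.val ∧ i.val < p then (1 : ℂ) else 0) * Wᴴ)
    (Y : Matrix (Fin m) (Fin n) ℂ) (hY : IsIdempotentElem (Yᴴ * Y)) :
    ∑ i, ∑ j, ‖(A - Sp) i j‖ ^ 2 ≤ ∑ i, ∑ j, ‖(A - Y) i j‖ ^ 2 := by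
  have hVstar : Vᴴ ∈ Matrix.unitaryGroup (Fin m) ℂ := Unitary.star_mem hV
  have hWstar : Wᴴ ∈ Matrix.unitaryGroup (Fin n) ℂ := Unitary.star_mem hW
  set B := Vᴴ * Y * W with hBdef
  have hVV : V * Vᴴ = 1 := Matrix.mem_unitaryGroup_iff.1 hV
  have hWW : W * Wᴴ = 1 := Matrix.mem_unitaryGroup_iff.1 hW
  have hYB : Y = V * B * Wᴴ := by
    rw [hBdef, ← Matrix.mul_assoc, ← Matrix.mul_assoc, hVV, Matrix.one_mul, Matrix.mul_assoc,
      hWW, Matrix.mul_one]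
  have hB : IsIdempotentElem (Bᴴ * B) :=
    Matrix.isIdempotentElem_conjTranspose_mul_self_unitary_mul_mul hVstar hW hY
  rw [hA, hSp, hYB, ← Matrix.sub_mul, ← Matrix.mul_sub, ← Matrix.sub_mul, ← Matrix.mul_sub,
    Matrix.sum_sum_norm_sq_unitary_mul_mul hV hWstar,
    Matrix.sum_sum_norm_sq_unitary_mul_mul hV hWstar]
  exact sum_sum_norm_sq_sub_truncation_le s hs0 p hp hp' rfl rfl hB

/-- Finite-dimensional best approximation by partial isometries (Frobenius norm):
if `A = V Σ Wᴴ` is a singular value decomposition of an `m × n` matrix whose nonzero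
singular values satisfy `s 0 ≥ … ≥ s (p-1) > 1/2 ≥ s p ≥ …`, then the partial isometry
`S_p = V (I_p ⊕ 0) Wᴴ`, obtained by truncating to the top `p` singular directions,
satisfies `‖A - S_p‖₂ ≤ ‖A - Y‖₂` for every `m × n` partial isometry `Y`
(stated with squared Frobenius norms). -/
theorem stmt_15 (m n : ℕ) (A : Matrix (Fin m) (Fin n) ℂ)
    (V : Matrix (Fin m) (Fin m) ℂ) (hV : V ∈ Matrix.unitaryGroup (Fin m) ℂ)
    (W : Matrix (Fin n) (Fin n) ℂ) (hW : W ∈ Matrix.unitaryGroup (Fin n) ℂ)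
    (s : ℕ → ℝ) (hs0 : ∀ i, 0 ≤ s i) (hsanti : Antitone s)
    (p : ℕ) (hp : ∀ i < p, 1 / 2 < s i) (hp' : ∀ i, p ≤ i → s i ≤ 1 / 2)
    (hA : A = V * Matrix.of (fun (i : Fin m) (j : Fin n) =>
      if i.val = j.val then Complex.ofReal (s i.val) else 0) * Wᴴ)
    (Sp : Matrix (Fin m) (Fin n) ℂ)
    (hSp : Sp = V * Matrix.of (fun (i : Fin m) (j : Fin n) =>
      if i.val = j.val ∧ i.val < p then (1 : ℂ) else 0) * Wᴴ)
    (Y : Matrix (Fin m) (Fin n) ℂ) (hY : IsIdempotentElem (Yᴴ * Y)) :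
    ∑ i, ∑ j, ‖(A - Sp) i j‖ ^ 2 ≤ ∑ i, ∑ j, ‖(A - Y) i j‖ ^ 2 :=
  stmt_15_general m n A V hV W hW s hs0 p hp hp' hA Sp hSp Y hY
end

section
/- If X and Y are partial isometries from ℓ² to a Hilbert space H with X − Y Hilbert–Schmidt and j(X*X, Y*Y) ≠ 0, then ‖X − Y‖₂ ≥ 1. Consequently, two Parseval frames quadratically close to a fixed frame but lying in different index components have ℓ²-distance at least 1. -/
/-!
A nonzero index produces a nonzero vector `v` lying in the initial space of one partial
isometry and in the kernel of the other, so `‖(X - Y) v‖ = ‖v‖` and hence `‖X - Y‖ ≥ 1`.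
The operator norm is dominated by the Hilbert–Schmidt norm, via the coordinates
`(T* u)ᵢ = ⟪T eᵢ, u⟫` of the adjoint.
-/

open scoped ComplexInnerProductSpace InnerProduct

noncomputable section

open ContinuousLinearMap

theorem lp.hasSum_norm_sq {ι 𝕜 : Type*} [RCLike 𝕜] {G : ι → Type*}
    [∀ i, NormedAddCommGroup (G i)] [∀ i, InnerProductSpace 𝕜 (G i)] (f : lp G 2) :
    HasSum (fun i => ‖f i‖ ^ 2) (‖f‖ ^ 2) := by
  simpa only [RCLike.reCLM_apply, inner_self_eq_norm_sq] using
    (lp.hasSum_inner (𝕜 := 𝕜) f f).mapL RCLike.reCLM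

theorem inner_stdVec_left (i : ℕ) (f : L2C) : ⟪stdVec i, f⟫ = f i := by
  simp [stdVec, lp.inner_single_left]

section HilbertSchmidt

variable {H : Type*} [NormedAddCommGroup H] [InnerProductSpace ℂ H] [CompleteSpace H]
  {T : L2C →L[ℂ] H}

theorem norm_adjoint_apply_sq_le_hsNormSq (hT : IsHS T) (u : H) :
    ‖(T†) u‖ ^ 2 ≤ hsNormSq T * ‖u‖ ^ 2 := by
  have hcoord (i : ℕ) : ‖((T†) u) i‖ ^ 2 ≤ ‖T (stdVec i)‖ ^ 2 * ‖u‖ ^ 2 := by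
    rw [← inner_stdVec_left, adjoint_inner_right, ← mul_pow]
    gcongr
    exact norm_inner_le_norm _ _
  rw [hsNormSq, ← tsum_mul_right]
  exact hasSum_le hcoord (lp.hasSum_norm_sq (𝕜 := ℂ) _) (hT.mul_right _).hasSum

theorem opNorm_sq_le_hsNormSq (hT : IsHS T) : ‖T‖ ^ 2 ≤ hsNormSq T := by
  have hnonneg : 0 ≤ hsNormSq T := tsum_nonneg fun _ => by positivity
  rw [← LinearIsometryEquiv.norm_map adjoint T, ← Real.le_sqrt (norm_nonneg _) hnonneg]
  refine opNorm_le_bound _ (Real.sqrt_nonneg _) fun u => ?_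
  refine le_of_pow_le_pow_left₀ two_ne_zero (by positivity) ?_
  rw [mul_pow, Real.sq_sqrt hnonneg]
  exact norm_adjoint_apply_sq_le_hsNormSq hT u

theorem one_le_hsNormSq_of_norm_apply_eq (hT : IsHS T) {v : L2C} (hv : v ≠ 0)
    (hTv : ‖T v‖ = ‖v‖) : 1 ≤ hsNormSq T := by
  have hone : 1 ≤ ‖T‖ := by
    refine le_of_mul_le_mul_right ?_ (norm_pos_iff.2 hv)
    simpa only [one_mul, hTv] using T.le_opNorm v
  nlinarith [opNorm_sq_le_hsNormSq hT]

end HilbertSchmidt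

theorem IsPartialIsometry.norm_sub_apply_eq {E F : Type*} [NormedAddCommGroup E]
    [InnerProductSpace ℂ E] [CompleteSpace E] [NormedAddCommGroup F] [InnerProductSpace ℂ F]
    [CompleteSpace F] {X Y : E →L[ℂ] F} (hX : IsPartialIsometry X) {v : E}
    (hvY : v ∈ LinearMap.ker (Y† ∘L Y : E →ₗ[ℂ] E))
    (hvX : v ∈ LinearMap.range (X† ∘L X : E →ₗ[ℂ] E)) :
    ‖(X - Y) v‖ = ‖v‖ := by
  have hYv : Y v = 0 := by
    rwa [← coe_coe, ← LinearMap.mem_ker, ← ker_adjoint_comp_self]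
  have hv_perp : v ∈ (LinearMap.ker (X : E →ₗ[ℂ] F))ᗮ := by
    rw [X.orthogonal_ker]
    exact Submodule.le_topologicalClosure _ (LinearMap.range_comp_le_range _ _ hvX)
  rw [sub_apply, hYv, sub_zero, hX v hv_perp]

theorem ne_bot_or_ne_bot_of_pairIndex_ne_zero {E : Type*} [NormedAddCommGroup E]
    [InnerProductSpace ℂ E] {P Q : E →L[ℂ] E} (h : pairIndex P Q ≠ 0) :
    LinearMap.ker (Q : E →ₗ[ℂ] E) ⊓ LinearMap.range (P : E →ₗ[ℂ] E) ≠ ⊥ ∨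
      LinearMap.range (Q : E →ₗ[ℂ] E) ⊓ LinearMap.ker (P : E →ₗ[ℂ] E) ≠ ⊥ := by
  contrapose! h
  rw [pairIndex, h.1, h.2]
  simp

/-- Partial isometries whose difference is Hilbert–Schmidt and whose initial
projections form a Fredholm pair of nonzero index are at Hilbert–Schmidt distance at
least 1 (stated with the squared Hilbert–Schmidt norm). -/
theorem stmt_19 {H : Type*} [NormedAddCommGroup H] [InnerProductSpace ℂ H]
    [CompleteSpace H] (X Y : L2C →L[ℂ] H)
    (hX : IsPartialIsometry X) (hY : IsPartialIsometry Y) (hhs : IsHS (X - Y))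
    (hind : pairIndex (ContinuousLinearMap.adjoint X ∘L X)
      (ContinuousLinearMap.adjoint Y ∘L Y) ≠ 0) :
    1 ≤ hsNormSq (X - Y) := by
  obtain hXY | hYX := ne_bot_or_ne_bot_of_pairIndex_ne_zero hind
  · obtain ⟨v, ⟨hv_ker, hv_ran⟩, hv0⟩ := Submodule.exists_mem_ne_zero_of_ne_bot hXY
    exact one_le_hsNormSq_of_norm_apply_eq hhs hv0 (hX.norm_sub_apply_eq hv_ker hv_ran)
  · obtain ⟨v, ⟨hv_ran, hv_ker⟩, hv0⟩ := Submodule.exists_mem_ne_zero_of_ne_bot hYX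
    refine one_le_hsNormSq_of_norm_apply_eq hhs hv0 ?_
    rw [← norm_neg, ← neg_apply, neg_sub]
    exact hY.norm_sub_apply_eq hv_ker hv_ran

end
end
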